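/- arXiv:1105.1737 — 11 statements merged into one kernel-verified Lean document; each statement's English description precedes it below -/
import Mathlib

section
/- Let E and F be normed spaces and let P : E → F be a polynomial of degree at most n (i.e., P = P₀ + P₁ + ⋯ + Pₙ where each Pₖ is a k-homogeneous polynomial, not assumed continuous). If P maps every compact subset of E to a compact subset of F, then P is continuous. -/
/-!
Fix `x`. Expanding the multilinear maps, `h ↦ P (h + x)` is a sum of functions `q j` with
`q j (t • h) = t ^ j • q j h`, `j ≤ n`. Since `P` maps compact sets to bounded sets, it is
bounded near `x`: otherwise some `xₘ → x` has `‖P xₘ‖ → ∞`, yet `{x} ∪ {xₘ}` is compact.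
Inverting the Vandermonde matrix of the nodes `0, 1, …, n` writes each `q j h` as a fixed
combination of the values `P (i • h + x)`, so every `q j` is bounded near `0`; rescaling `h`
then shows that a bounded `q j` with `j ≥ 1` is `O(‖h‖)` at `0`, while `q 0` is constant.
-/

open Finset Filter Topology Asymptotics

theorem eq_sum_inv_vandermonde_smul {K M : Type*} [Field K] [AddCommGroup M] [Module K M]
    {n : ℕ} {a : Fin n → K} (ha : Function.Injective a) {c v : Fin n → M}
    (hv : ∀ i, v i = ∑ j : Fin n, a i ^ (j : ℕ) • c j) (j : Fin n) :
    c j = ∑ i, (Matrix.vandermonde a)⁻¹ j i • v i := by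
  set V := Matrix.vandermonde a
  have hV : V⁻¹ * V = 1 := Matrix.nonsing_inv_mul V
    (isUnit_iff_ne_zero.2 (Matrix.det_vandermonde_ne_zero_iff.2 ha))
  calc c j = ∑ j', (V⁻¹ * V) j j' • c j' := by simp [hV, Matrix.one_apply, ite_smul]
    _ = ∑ i, V⁻¹ j i • v i := by
      simp only [hv, Matrix.mul_apply, sum_smul, smul_sum, mul_smul,
        V, Matrix.vandermonde_apply]
      exact sum_comm

theorem isBigO_one_nhds_of_isBounded_image_of_isCompact {X F : Type*} [TopologicalSpace X]
    [FirstCountableTopology X] [SeminormedAddCommGroup F] {f : X → F}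
    (hf : ∀ K, IsCompact K → Bornology.IsBounded (f '' K)) (x : X) :
    f =O[𝓝 x] (fun _ => (1 : ℝ)) := by
  rw [isBigO_one_iff]
  by_contra hunb
  have : (𝓝 x ⊓ comap (fun y => ‖f y‖) atTop).NeBot := by
    refine ⟨fun hbot => hunb ?_⟩
    obtain ⟨U, hU, V, hV, hUV⟩ := inf_eq_bot_iff.1 hbot
    obtain ⟨W, hW, hWV⟩ := mem_comap.1 hV
    obtain ⟨M, hM⟩ := mem_atTop_sets.1 hW
    refine isBoundedUnder_of_eventually_le (a := M) (mem_of_superset hU fun y hy => ?_)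
    by_contra hlt
    exact (Set.eq_empty_iff_forall_notMem.1 hUV) y ⟨hy, hWV (hM _ (not_le.1 hlt).le)⟩
  obtain ⟨u, hu⟩ := exists_seq_tendsto (𝓝 x ⊓ comap (fun y => ‖f y‖) atTop)
  rw [tendsto_inf, tendsto_comap_iff] at hu
  obtain ⟨M, hM⟩ := (hf _ hu.1.isCompact_insert_range).exists_norm_le
  obtain ⟨m, hm⟩ := (hu.2.eventually_gt_atTop M).exists
  exact hm.not_ge (hM _ (Set.mem_image_of_mem f (Set.mem_insert_of_mem _ ⟨m, rfl⟩)))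

section Homogeneous

variable {E F : Type*} [NormedAddCommGroup E] [NormedSpace ℝ E]
  [NormedAddCommGroup F] [NormedSpace ℝ F]

theorem isBigO_id_nhds_zero_of_homogeneous {q : E → F} {j : ℕ} (hj : j ≠ 0)
    (hq : ∀ (t : ℝ) h, q (t • h) = t ^ j • q h) (hb : q =O[𝓝 0] (fun _ => (1 : ℝ))) :
    q =O[𝓝 0] (fun h => h) := by
  obtain ⟨C, hC⟩ := hb.bound
  obtain ⟨r, hr, hball⟩ := Metric.eventually_nhds_iff_ball.1 hC
  have hq0 : q 0 = 0 := by simpa [zero_pow hj] using hq 0 0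
  refine IsBigO.of_bound (C / (r / 2)) ?_
  filter_upwards [Metric.ball_mem_nhds (0 : E) (half_pos hr)] with h hh
  rw [mem_ball_zero_iff] at hh
  rcases eq_or_ne h 0 with rfl | h0
  · simp [hq0]
  set s := ‖h‖ / (r / 2)
  have hs : 0 ≤ s := by positivity
  have hs1 : s ≤ 1 := (div_le_one (half_pos hr)).2 hh.le
  have hu : ‖s⁻¹ • h‖ < r := by
    rw [norm_smul, Real.norm_of_nonneg (inv_nonneg.2 hs), inv_div,
      div_mul_cancel₀ _ (norm_ne_zero_iff.2 h0)]
    exact half_lt_self hr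
  have hqu : ‖q (s⁻¹ • h)‖ ≤ C := by
    simpa using hball _ (mem_ball_zero_iff.2 hu)
  calc ‖q h‖ = s ^ j * ‖q (s⁻¹ • h)‖ := by
        rw [← Real.norm_of_nonneg (pow_nonneg hs j), ← norm_smul, ← hq, smul_inv_smul₀]
        exact div_ne_zero (norm_ne_zero_iff.2 h0) (half_pos hr).ne'
    _ ≤ s * C := by
        gcongr
        exact pow_le_of_le_one hs hs1 hj
    _ = C / (r / 2) * ‖h‖ := by ring

theorem continuousAt_zero_of_homogeneous {q : E → F} {j : ℕ}
    (hq : ∀ (t : ℝ) h, q (t • h) = t ^ j • q h) (hb : q =O[𝓝 0] (fun _ => (1 : ℝ))) :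
    ContinuousAt q 0 := by
  rcases eq_or_ne j 0 with rfl | hj
  · have : q = fun _ => q 0 := funext fun h => by simpa using (hq 0 h).symm
    rw [this]
    exact continuousAt_const
  · have hq0 : q 0 = 0 := by simpa [zero_pow hj] using hq 0 0
    rw [ContinuousAt, hq0]
    exact (isBigO_id_nhds_zero_of_homogeneous hj hq hb).trans_tendsto tendsto_id

theorem continuousAt_zero_of_sum_homogeneous {n : ℕ} {q : ℕ → E → F}
    (hq : ∀ j (t : ℝ) h, q j (t • h) = t ^ j • q j h)
    (hb : (fun h => ∑ j ∈ range (n + 1), q j h) =O[𝓝 0] (fun _ => (1 : ℝ))) :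
    ContinuousAt (fun h => ∑ j ∈ range (n + 1), q j h) 0 := by
  have hinj : Function.Injective fun i : Fin (n + 1) => ((i : ℕ) : ℝ) :=
    Nat.cast_injective.comp Fin.val_injective
  have hqj : ∀ j ∈ range (n + 1), q j =O[𝓝 0] (fun _ => (1 : ℝ)) := by
    intro j hj
    have hsmul : ∀ i : Fin (n + 1), Tendsto (fun h : E => ((i : ℕ) : ℝ) • h) (𝓝 0) (𝓝 0) :=
      fun i => by simpa using (tendsto_id (x := 𝓝 (0 : E))).const_smul ((i : ℕ) : ℝ)
    have hcoeff := fun h => eq_sum_inv_vandermonde_smul hinj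
      (c := fun j : Fin (n + 1) => q j h)
      (v := fun i => ∑ j ∈ range (n + 1), q j (((i : ℕ) : ℝ) • h))
      (fun i => by simp [hq, ← Fin.sum_univ_eq_sum_range (fun j => ((i : ℕ) : ℝ) ^ j • q j h)])
      ⟨j, mem_range.1 hj⟩
    rw [show q j = _ from funext hcoeff]
    exact IsBigO.fun_sum fun i _ => ((hb.comp_tendsto (hsmul i)).const_smul_left _)
  exact tendsto_finsetSum _ fun j hj => continuousAt_zero_of_homogeneous (hq j) (hqj j hj)

end Homogeneous

namespace MultilinearMap

variable {R M N ι : Type*} [CommSemiring R] [AddCommMonoid M] [Module R M]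
  [AddCommMonoid N] [Module R N] [DecidableEq ι]

theorem map_piecewise_const_smul (f : MultilinearMap R (fun _ : ι => M) N) (S : Finset ι)
    (t : R) (h x : M) :
    f (S.piecewise (fun _ => t • h) (fun _ => x))
      = t ^ S.card • f (S.piecewise (fun _ => h) (fun _ => x)) := by
  rw [← prod_const, ← f.map_piecewise_smul]
  congr 1
  ext i
  by_cases hi : i ∈ S <;> simp [hi]

theorem map_const_add_eq_sum_card [Fintype ι] (f : MultilinearMap R (fun _ : ι => M) N)
    (h x : M) {n : ℕ} (hn : Fintype.card ι ≤ n) :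
    f (fun _ => h + x)
      = ∑ j ∈ Finset.range (n + 1), ∑ S : Finset ι with S.card = j,
          f (S.piecewise (fun _ => h) (fun _ => x)) := by
  rw [show (fun _ => h + x) = (fun _ : ι => h) + (fun _ => x) from rfl, map_add_univ]
  exact (sum_fiberwise_of_maps_to
    (fun S _ => mem_range.2 (Nat.lt_succ_of_le ((card_le_univ S).trans hn))) _).symm

end MultilinearMap

section Shift

variable {R M N : Type*} [CommSemiring R] [AddCommMonoid M] [Module R M]
  [AddCommMonoid N] [Module R N]

/-- The `j`-homogeneous part of `h ↦ ∑ k ≤ n, L k (h + x, …, h + x)`. -/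
noncomputable def shiftComponent (L : ∀ k : ℕ, MultilinearMap R (fun _ : Fin k => M) N)
    (n : ℕ) (x : M) (j : ℕ) (h : M) : N :=
  ∑ k ∈ range (n + 1), ∑ S : Finset (Fin k) with S.card = j,
    L k (S.piecewise (fun _ => h) (fun _ => x))

variable (L : ∀ k : ℕ, MultilinearMap R (fun _ : Fin k => M) N) (n : ℕ) (x : M)

theorem shiftComponent_smul (j : ℕ) (t : R) (h : M) :
    shiftComponent L n x j (t • h) = t ^ j • shiftComponent L n x j h := by
  simp only [shiftComponent, smul_sum]
  refine sum_congr rfl fun k _ => sum_congr rfl fun S hS => ?_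
  rw [(L k).map_piecewise_const_smul, (mem_filter.1 hS).2]

theorem sum_shiftComponent (h : M) :
    ∑ j ∈ range (n + 1), shiftComponent L n x j h
      = ∑ k ∈ range (n + 1), L k (fun _ => h + x) := by
  simp only [shiftComponent]
  rw [sum_comm]
  refine sum_congr rfl fun k hk => ?_
  rw [(L k).map_const_add_eq_sum_card h x (by simpa [Nat.lt_succ_iff] using hk)]

end Shift

theorem stmt_0_general
    {E F : Type*} [NormedAddCommGroup E] [NormedSpace ℝ E]
    [NormedAddCommGroup F] [NormedSpace ℝ F]
    (n : ℕ) (P : E → F)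
    (L : ∀ k : ℕ, MultilinearMap ℝ (fun _ : Fin k => E) F)
    (hP : ∀ x : E, P x = ∑ k ∈ Finset.range (n + 1), L k (fun _ => x))
    (hcomp : ∀ K : Set E, IsCompact K → IsCompact (P '' K)) :
    Continuous P := by
  refine continuous_iff_continuousAt.2 fun x => ?_
  have hshift : (fun h => P (h + x)) = fun h => ∑ j ∈ range (n + 1), shiftComponent L n x j h :=
    funext fun h => by rw [sum_shiftComponent, hP]
  have hPx : P =O[𝓝 x] (fun _ => (1 : ℝ)) :=
    isBigO_one_nhds_of_isBounded_image_of_isCompact (fun K hK => (hcomp K hK).isBounded) x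
  have hbdd : (fun h => P (h + x)) =O[𝓝 0] (fun _ => (1 : ℝ)) :=
    hPx.comp_tendsto (by simpa using (tendsto_id (x := 𝓝 (0 : E))).add_const x)
  rw [hshift] at hbdd
  have hcont := continuousAt_zero_of_sum_homogeneous (shiftComponent_smul L n x) hbdd
  rw [← hshift] at hcont
  simpa [Function.comp_def] using
    hcont.comp_of_eq (continuousAt_id.sub continuousAt_const) (sub_self x)

/-- A (possibly discontinuous) polynomial of degree at most `n` between normed spaces,
mapping compact sets to compact sets, is continuous. -/
theorem stmt_0
    {E F : Type*} [NormedAddCommGroup E] [NormedSpace ℝ E]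
    [NormedAddCommGroup F] [NormedSpace ℝ F]
    (n : ℕ) (P : E → F)
    (L : ∀ k : ℕ, MultilinearMap ℝ (fun _ : Fin k => E) F)
    (hsym : ∀ (k : ℕ) (σ : Equiv.Perm (Fin k)) (v : Fin k → E),
      L k (fun i => v (σ i)) = L k v)
    (hP : ∀ x : E, P x = ∑ k ∈ Finset.range (n + 1), L k (fun _ => x))
    (hcomp : ∀ K : Set E, IsCompact K → IsCompact (P '' K)) :
    Continuous P :=
  stmt_0_general n P L hP hcomp
end

section
/- Let E and F be normed spaces and P : E → F a polynomial of degree at most n. Then P is continuous if and only if P maps compact subsets of E to compact subsets of F. -/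
/-!
A map sending compact sets to compact sets is bounded near every point: a sequence converging to
`x` whose images escape to infinity would, together with `x`, form a compact set with unbounded
image. Along each line `u ↦ x + u • h` a polynomial of degree at most `n` is a polynomial in `u`
with coefficients in `F`; inverting a Vandermonde matrix bounds these coefficients by the bound of
`P` on a ball around `x`, and this yields `‖P y - P x‖ ≤ K * ‖y - x‖` near `x`.
-/

open Finset Topology Set

theorem MultilinearMap.map_const_add_smul_const {R ι M N : Type*} [CommSemiring R]
    [AddCommMonoid M] [Module R M] [AddCommMonoid N] [Module R N] [Fintype ι] [DecidableEq ι]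
    (f : MultilinearMap R (fun _ : ι => M) N) (x h : M) (u : R) :
    f (fun _ => x + u • h) =
      ∑ s : Finset ι, u ^ s.card • f (s.piecewise (fun _ => h) (fun _ => x)) := by
  have hsplit : (fun _ : ι => x + u • h) = (fun _ => u • h) + fun _ => x := by
    funext; exact add_comm _ _
  rw [hsplit, f.map_add_univ]
  refine Finset.sum_congr rfl fun s _ => ?_
  rw [← prod_const, ← f.map_piecewise_smul]
  congr 1
  ext i
  by_cases hi : i ∈ s <;> simp [hi]

theorem exists_line_expansion_sum_multilinear {R M N : Type*} [CommSemiring R]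
    [AddCommMonoid M] [Module R M] [AddCommMonoid N] [Module R N] (n : ℕ)
    (L : ∀ k : ℕ, MultilinearMap R (fun _ : Fin k => M) N) (x : M) :
    ∃ a : ℕ → M → N, ∀ (u : R) (h : M),
      ∑ k ∈ range (n + 1), L k (fun _ => x + u • h) = ∑ j ∈ range (n + 1), u ^ j • a j h := by
  refine ⟨fun j h => ∑ k ∈ range (n + 1), ∑ s : Finset (Fin k) with s.card = j,
    L k (s.piecewise (fun _ => h) (fun _ => x)), fun u h => ?_⟩
  have hcard : ∀ k ∈ range (n + 1), ∀ s : Finset (Fin k), s.card ∈ range (n + 1) := by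
    intro k hk s
    have := s.card_le_univ
    rw [Fintype.card_fin] at this
    rw [Finset.mem_range] at hk ⊢
    omega
  simp_rw [(L _).map_const_add_smul_const, smul_sum]
  rw [sum_comm]
  refine sum_congr rfl fun k hk => ?_
  rw [← sum_fiberwise_of_maps_to (fun s _ => hcard k hk s)]
  refine sum_congr rfl fun j _ => sum_congr rfl fun s hs => ?_
  rw [(mem_filter.1 hs).2]

theorem Matrix.sum_inv_smul_sum_smul {R ι F : Type*} [CommRing R] [Fintype ι] [DecidableEq ι]
    [AddCommGroup F] [Module R F] (A : Matrix ι ι R) (hA : IsUnit A.det) (a : ι → F) (k : ι) :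
    ∑ i, A⁻¹ k i • ∑ l, A i l • a l = a k := by
  simp_rw [smul_sum, smul_smul]
  rw [sum_comm]
  simp_rw [← Finset.sum_smul, ← Matrix.mul_apply, Matrix.nonsing_inv_mul A hA, Matrix.one_apply,
    ite_smul, one_smul, zero_smul, Finset.sum_ite_eq, Finset.mem_univ, if_true]

theorem exists_isBounded_image_nhds_of_isCompact_image {X Y : Type*} [TopologicalSpace X]
    [FirstCountableTopology X] [PseudoMetricSpace Y] {f : X → Y}
    (hf : ∀ K, IsCompact K → IsCompact (f '' K)) (x : X) :
    ∃ U ∈ 𝓝 x, Bornology.IsBounded (f '' U) := by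
  by_contra! hunb
  obtain ⟨u, hu⟩ := (𝓝 x).exists_antitone_basis
  have hfar : ∀ m : ℕ, ∃ y ∈ u m, m < dist (f y) (f x) := fun m => by
    by_contra! hnear
    refine hunb (u m) (hu.mem m) ((Metric.isBounded_iff_subset_closedBall (f x)).2 ⟨m, ?_⟩)
    rintro _ ⟨y, hy, rfl⟩
    exact hnear y hy
  choose y hyu hyf using hfar
  obtain ⟨R, hR⟩ := (Metric.isBounded_iff_subset_closedBall (f x)).1
    (hf _ (hu.tendsto hyu).isCompact_insert_range).isBounded
  obtain ⟨m, hm⟩ := exists_nat_gt R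
  exact (hm.trans (hyf m)).not_ge (hR ⟨y m, mem_insert_of_mem _ ⟨m, rfl⟩, rfl⟩)

section
variable {F : Type*} [NormedAddCommGroup F] [NormedSpace ℝ F]

theorem exists_norm_coeff_le_of_norm_le_on_Icc (n : ℕ) :
    ∃ C : ℝ, ∀ (a : ℕ → F) (M : ℝ), (∀ u ∈ Icc (0 : ℝ) 1, ‖∑ j ∈ range (n + 1), u ^ j • a j‖ ≤ M) →
      ∀ j ∈ range (n + 1), ‖a j‖ ≤ C * M := by
  set t : Fin (n + 1) → ℝ := fun i => i / (n + 1)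
  have ht : Function.Injective t := fun i i' h => by
    simpa [t, div_left_inj' (show (n : ℝ) + 1 ≠ 0 by positivity), Fin.val_inj] using h
  have ht01 : ∀ i, t i ∈ Icc (0 : ℝ) 1 := fun i =>
    ⟨by positivity, div_le_one_of_le₀ (by exact_mod_cast i.is_le.trans n.le_succ) (by positivity)⟩
  set V := Matrix.vandermonde t
  have hV : IsUnit V.det := isUnit_iff_ne_zero.2 (Matrix.det_vandermonde_ne_zero_iff.2 ht)
  refine ⟨∑ k, ∑ i, |V⁻¹ k i|, fun a M hM j hj => ?_⟩
  set k : Fin (n + 1) := ⟨j, Finset.mem_range.1 hj⟩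
  have hM0 : 0 ≤ M := (norm_nonneg _).trans (hM 0 ⟨le_rfl, zero_le_one⟩)
  have hval : ∀ i, ∑ l, V i l • a l = ∑ j ∈ range (n + 1), t i ^ j • a j := fun i => by
    simp [V, Matrix.vandermonde_apply, Fin.sum_univ_eq_sum_range (fun j => t i ^ j • a j)]
  calc ‖a j‖ = ‖∑ i, V⁻¹ k i • ∑ l, V i l • a l‖ := by
        rw [V.sum_inv_smul_sum_smul hV (fun l : Fin (n + 1) => a l)]
    _ ≤ ∑ i, |V⁻¹ k i| * M := by
        refine (norm_sum_le _ _).trans (sum_le_sum fun i _ => ?_)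
        rw [norm_smul, Real.norm_eq_abs, hval]
        exact mul_le_mul_of_nonneg_left (hM _ (ht01 i)) (abs_nonneg _)
    _ ≤ (∑ k, ∑ i, |V⁻¹ k i|) * M := by
        rw [← sum_mul]
        refine mul_le_mul_of_nonneg_right ?_ hM0
        exact single_le_sum (f := fun k => ∑ i, |V⁻¹ k i|)
          (fun _ _ => sum_nonneg fun _ _ => abs_nonneg _) (mem_univ k)

theorem exists_norm_sub_coeff_zero_le_of_norm_le_on_Icc (n : ℕ) :
    ∃ C : ℝ, ∀ (a : ℕ → F) (M : ℝ), (∀ u ∈ Icc (0 : ℝ) 1, ‖∑ j ∈ range (n + 1), u ^ j • a j‖ ≤ M) →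
      ∀ s ∈ Icc (0 : ℝ) 1, ‖∑ j ∈ range (n + 1), s ^ j • a j - a 0‖ ≤ n * C * M * s := by
  obtain ⟨C, hC⟩ := exists_norm_coeff_le_of_norm_le_on_Icc (F := F) n
  refine ⟨C, fun a M hM s hs => ?_⟩
  rw [sum_range_succ', pow_zero, one_smul, add_sub_cancel_right]
  calc ‖∑ j ∈ range n, s ^ (j + 1) • a (j + 1)‖ ≤ ∑ j ∈ range n, s * (C * M) := by
        refine (norm_sum_le _ _).trans (sum_le_sum fun j hj => ?_)
        rw [norm_smul, Real.norm_of_nonneg (pow_nonneg hs.1 _)]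
        refine mul_le_mul (pow_le_of_le_one hs.1 hs.2 j.succ_ne_zero) ?_ (norm_nonneg _) hs.1
        exact hC a M hM _ (Finset.mem_range.2 (Nat.succ_lt_succ (Finset.mem_range.1 hj)))
    _ = n * C * M * s := by rw [sum_const, card_range, nsmul_eq_mul]; ring

end

theorem continuousAt_of_isBounded_image_nhds_of_line_expansion {E F : Type*}
    [NormedAddCommGroup E] [NormedSpace ℝ E] [NormedAddCommGroup F] [NormedSpace ℝ F]
    {g : E → F} {x : E} {n : ℕ} {a : ℕ → E → F} (hg : ∃ U ∈ 𝓝 x, Bornology.IsBounded (g '' U))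
    (ha : ∀ (u : ℝ) (h : E), g (x + u • h) = ∑ j ∈ range (n + 1), u ^ j • a j h) :
    ContinuousAt g x := by
  obtain ⟨U, hU, hbdd⟩ := hg
  obtain ⟨r, hr, hrU⟩ := Metric.nhds_basis_closedBall.mem_iff.1 hU
  obtain ⟨M, hM⟩ := isBounded_iff_forall_norm_le.1 hbdd
  obtain ⟨C, hC⟩ := exists_norm_sub_coeff_zero_le_of_norm_le_on_Icc (F := F) n
  refine continuousAt_of_locally_lipschitz hr (n * C * M / r) fun y hy => ?_
  rcases eq_or_ne y x with rfl | hyx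
  · simp
  simp only [dist_eq_norm] at hy ⊢
  set d := y - x
  have hd : 0 < ‖d‖ := norm_pos_iff.2 (sub_ne_zero.2 hyx)
  set s := ‖d‖ / r
  have hs : s ∈ Icc (0 : ℝ) 1 := ⟨by positivity, div_le_one_of_le₀ hy.le hr.le⟩
  -- `y = x + s • h` with `‖h‖ = r`, so the segment `x + [0, 1] • h` stays in the ball
  have hbound : ∀ u ∈ Icc (0 : ℝ) 1, ‖∑ j ∈ range (n + 1), u ^ j • a j (s⁻¹ • d)‖ ≤ M := by
    intro u hu
    rw [← ha]
    refine hM _ ⟨_, hrU ?_, rfl⟩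
    rw [Metric.mem_closedBall, dist_eq_norm, add_sub_cancel_left, norm_smul, norm_smul, norm_inv,
      Real.norm_of_nonneg hu.1, Real.norm_of_nonneg hs.1, inv_div, div_mul_cancel₀ _ hd.ne']
    exact mul_le_of_le_one_left hr.le hu.2
  have hx : a 0 (s⁻¹ • d) = g x := by
    simpa [sum_range_succ'] using (ha 0 (s⁻¹ • d)).symm
  have hy' : x + s • s⁻¹ • d = y := by
    rw [smul_inv_smul₀ (by positivity), add_sub_cancel]
  calc ‖g y - g x‖ ≤ n * C * M * s := by
        simpa only [← ha, hx, hy'] using hC _ M hbound s hs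
    _ = n * C * M / r * ‖d‖ := by ring

theorem stmt_1_general
    {E F : Type*} [NormedAddCommGroup E] [NormedSpace ℝ E]
    [NormedAddCommGroup F] [NormedSpace ℝ F]
    (n : ℕ) (P : E → F)
    (L : ∀ k : ℕ, MultilinearMap ℝ (fun _ : Fin k => E) F)
    (hP : ∀ x : E, P x = ∑ k ∈ Finset.range (n + 1), L k (fun _ => x)) :
    Continuous P ↔ ∀ K : Set E, IsCompact K → IsCompact (P '' K) := by
  refine ⟨fun hcont K hK => hK.image hcont, fun hcomp => continuous_iff_continuousAt.2 fun x => ?_⟩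
  obtain ⟨a, ha⟩ := exists_line_expansion_sum_multilinear n L x
  exact continuousAt_of_isBounded_image_nhds_of_line_expansion
    (exists_isBounded_image_nhds_of_isCompact_image hcomp x) fun u h => (hP _).trans (ha u h)

/-- A (possibly discontinuous) polynomial of degree at most `n` between normed spaces
is continuous iff it maps compact sets to compact sets. -/
theorem stmt_1
    {E F : Type*} [NormedAddCommGroup E] [NormedSpace ℝ E]
    [NormedAddCommGroup F] [NormedSpace ℝ F]
    (n : ℕ) (P : E → F)
    (L : ∀ k : ℕ, MultilinearMap ℝ (fun _ : Fin k => E) F)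
    (hsym : ∀ (k : ℕ) (σ : Equiv.Perm (Fin k)) (v : Fin k → E),
      L k (fun i => v (σ i)) = L k v)
    (hP : ∀ x : E, P x = ∑ k ∈ Finset.range (n + 1), L k (fun _ => x)) :
    Continuous P ↔ ∀ K : Set E, IsCompact K → IsCompact (P '' K) :=
  stmt_1_general n P L hP
end

section
/- Let E and F be normed spaces and P : E → F a polynomial of degree at most n. If P is continuous at the point 0, then P is continuous everywhere on E. -/
/-!
Write `P = ∑ pₖ` with `pₖ x = Lₖ (x, …, x)`, homogeneous of degree `k`. Since `t ↦ P (t • x)` is a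
polynomial of degree at most `n`, interpolation at `t = 0, …, n` writes each `pₖ` as a fixed linear
combination of the maps `x ↦ P (i • x)`, so continuity of `P` at `0` makes every `pₖ` bounded near `0`.
Homogeneity upgrades this to `‖pₖ x‖ ≤ C ‖x‖ ^ k`, so `P` is bounded near every point `a`. The
translate `x ↦ P (x + a)` is again a sum of homogeneous terms of degree at most `n`; the same
interpolation bounds its terms near `0`, and a homogeneous term of positive degree with
`‖q x‖ ≤ C ‖x‖ ^ j` tends to `0`.
-/

open Filter Topology Asymptotics Finset

section

variable {E F : Type*} [NormedAddCommGroup E] [NormedSpace ℝ E]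
  [NormedAddCommGroup F] [NormedSpace ℝ F]

def IsHomogeneousFun (g : E → F) (k : ℕ) : Prop :=
  ∀ (c : ℝ) (x : E), g (c • x) = c ^ k • g x

namespace IsHomogeneousFun

variable {g : E → F} {k : ℕ}

theorem sum {ι : Type*} (s : Finset ι) {g : ι → E → F}
    (hg : ∀ i ∈ s, IsHomogeneousFun (g i) k) :
    IsHomogeneousFun (fun x => ∑ i ∈ s, g i x) k := fun c x => by
  rw [smul_sum]
  exact sum_congr rfl fun i hi => hg i hi c x

theorem exists_norm_le (hg : IsHomogeneousFun g k) (hb : g =O[𝓝 0] fun _ => (1 : ℝ)) :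
    ∃ C, ∀ x, ‖g x‖ ≤ C * ‖x‖ ^ k := by
  obtain ⟨M, hM⟩ := hb.bound
  obtain ⟨r, hr, hrM⟩ := Metric.nhds_basis_closedBall.eventually_iff.1 hM
  refine ⟨M / r ^ k, fun x => ?_⟩
  set c := ‖x‖ / r
  have hx : x = c • c⁻¹ • x := by
    rcases eq_or_ne x 0 with rfl | hx
    · simp
    · exact (smul_inv_smul₀ (by positivity) x).symm
  have hy : ‖c⁻¹ • x‖ ≤ r := by
    rcases eq_or_ne x 0 with rfl | hx
    · simp [hr.le]
    · rw [norm_smul, norm_inv, Real.norm_of_nonneg (by positivity),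
        inv_mul_le_iff₀ (by positivity)]
      simp [c, div_mul_cancel₀ _ hr.ne']
  calc ‖g x‖ = c ^ k * ‖g (c⁻¹ • x)‖ := by
        conv_lhs => rw [hx, hg, norm_smul, Real.norm_of_nonneg (by positivity)]
    _ ≤ c ^ k * M := by
        gcongr
        simpa using hrM (mem_closedBall_zero_iff.2 hy)
    _ = M / r ^ k * ‖x‖ ^ k := by
        rw [div_pow]
        ring

theorem isBigO_one (hg : IsHomogeneousFun g k) (hb : g =O[𝓝 0] fun _ => (1 : ℝ)) (a : E) :
    g =O[𝓝 a] fun _ => (1 : ℝ) := by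
  obtain ⟨C, hC⟩ := hg.exists_norm_le hb
  have hcont : Continuous fun x : E => C * ‖x‖ ^ k := by fun_prop
  have hle : g =O[𝓝 a] fun x => C * ‖x‖ ^ k :=
    isBigO_of_le _ fun x => (hC x).trans (Real.le_norm_self _)
  exact hle.trans ((hcont.tendsto a).isBigO_one ℝ)

theorem continuousAt_zero (hg : IsHomogeneousFun g k) (hb : g =O[𝓝 0] fun _ => (1 : ℝ)) :
    ContinuousAt g 0 := by
  rcases eq_or_ne k 0 with rfl | hk
  · have hconst : g = fun _ => g 0 := funext fun x => by simpa using (hg 0 x).symm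
    rw [hconst]
    exact continuousAt_const
  · obtain ⟨C, hC⟩ := hg.exists_norm_le hb
    have hlim : Tendsto (fun x : E => C * ‖x‖ ^ k) (𝓝 0) (𝓝 0) := by
      simpa [hk] using ((by fun_prop : Continuous fun x : E => C * ‖x‖ ^ k).tendsto 0)
    have hg0 : g 0 = 0 := by simpa [hk] using hC 0
    rw [ContinuousAt, hg0]
    exact squeeze_zero_norm hC hlim

end IsHomogeneousFun

/-- Lagrange interpolation at the nodes `0, …, n`: the coefficients `c` of a vector-valued
polynomial of degree at most `n` are fixed linear combinations of its values at these nodes. -/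
theorem exists_coeff_eq_sum_smul_values (n : ℕ) :
    ∃ w : Fin (n + 1) → Fin (n + 1) → ℝ, ∀ (c : Fin (n + 1) → F) (k : Fin (n + 1)),
      c k = ∑ i, w k i • ∑ m : Fin (n + 1), ((i : ℕ) : ℝ) ^ (m : ℕ) • c m := by
  set V := Matrix.vandermonde fun i : Fin (n + 1) => ((i : ℕ) : ℝ)
  have hV : IsUnit V.det := by
    rw [isUnit_iff_ne_zero, Matrix.det_vandermonde_ne_zero_iff]
    exact Nat.cast_injective.comp Fin.val_injective
  obtain ⟨W, hW⟩ : ∃ W, W * V = 1 := ⟨V⁻¹, Matrix.nonsing_inv_mul _ hV⟩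
  refine ⟨W, fun c k => ?_⟩
  calc c k = ∑ m, (W * V) k m • c m := by simp [hW, Matrix.one_apply]
    _ = ∑ i, W k i • ∑ m, V i m • c m := by
        simp_rw [Matrix.mul_apply, sum_smul, smul_sum, smul_smul]
        exact sum_comm
    _ = _ := by simp [V, Matrix.vandermonde_apply]

section SumOfHomogeneous

variable {G : E → F} {q : ℕ → E → F} {n : ℕ}

theorem isBigO_one_of_sum_isHomogeneousFun (hq : ∀ m, IsHomogeneousFun (q m) m)
    (hG : ∀ x, G x = ∑ m ∈ range (n + 1), q m x) (hb : G =O[𝓝 0] fun _ => (1 : ℝ))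
    {k : ℕ} (hk : k ≤ n) : q k =O[𝓝 0] fun _ => (1 : ℝ) := by
  obtain ⟨w, hw⟩ := exists_coeff_eq_sum_smul_values (F := F) n
  have hqk : q k = fun x => ∑ i : Fin (n + 1), w ⟨k, by omega⟩ i • G (((i : ℕ) : ℝ) • x) := by
    funext x
    refine (hw (fun m => q m x) ⟨k, by omega⟩).trans (sum_congr rfl fun i _ => ?_)
    rw [hG, ← Fin.sum_univ_eq_sum_range (fun m => q m _)]
    exact congrArg _ (sum_congr rfl fun m _ => (hq _ _ _).symm)
  rw [hqk]
  refine IsBigO.fun_sum fun i _ => (hb.comp_tendsto ?_).const_smul_left _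
  simpa using (continuous_const_smul (((i : ℕ) : ℝ))).tendsto (0 : E)

theorem continuousAt_zero_of_sum_isHomogeneousFun (hq : ∀ m, IsHomogeneousFun (q m) m)
    (hG : ∀ x, G x = ∑ m ∈ range (n + 1), q m x) (hb : G =O[𝓝 0] fun _ => (1 : ℝ)) :
    ContinuousAt G 0 := by
  rw [show G = fun x => ∑ m ∈ range (n + 1), q m x from funext hG]
  exact tendsto_finsetSum _ fun m hm => (hq m).continuousAt_zero
    (isBigO_one_of_sum_isHomogeneousFun hq hG hb (Nat.lt_succ_iff.1 (mem_range.1 hm)))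

end SumOfHomogeneous

namespace MultilinearMap

variable {k : ℕ} (f : MultilinearMap ℝ (fun _ : Fin k => E) F)

theorem isHomogeneousFun_diag : IsHomogeneousFun (fun x => f fun _ => x) k := fun c x => by
  simpa using f.map_smul_univ (fun _ => c) (fun _ => x)

/-- The degree-`j` part of `x ↦ f (x + a, …, x + a)`. -/
def diagTermAt (a : E) (j : ℕ) (x : E) : F :=
  ∑ s : Finset (Fin k) with #s = j, f (s.piecewise (fun _ => x) (fun _ => a))

theorem map_piecewise_smul_const (s : Finset (Fin k)) (c : ℝ) (x a : E) :
    f (s.piecewise (fun _ => c • x) (fun _ => a))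
      = c ^ #s • f (s.piecewise (fun _ => x) (fun _ => a)) := by
  rw [← prod_const, ← f.map_piecewise_smul]
  congr 1
  ext i
  by_cases hi : i ∈ s <;> simp [hi]

theorem isHomogeneousFun_diagTermAt (a : E) (j : ℕ) :
    IsHomogeneousFun (f.diagTermAt a j) j := fun c x => by
  rw [diagTermAt, diagTermAt, smul_sum]
  refine sum_congr rfl fun s hs => ?_
  rw [map_piecewise_smul_const, (mem_filter.1 hs).2]

theorem map_diag_add_eq_sum_diagTermAt (a x : E) {n : ℕ} (hk : k ≤ n) :
    f (fun _ => x + a) = ∑ j ∈ Finset.range (n + 1), f.diagTermAt a j x := by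
  have hcard : ∀ s : Finset (Fin k), #s ∈ Finset.range (n + 1) := fun s =>
    mem_range.2 (Nat.lt_succ_of_le ((card_le_univ s).trans (by simpa using hk)))
  rw [show (fun _ => x + a) = (fun _ : Fin k => x) + fun _ => a from rfl, f.map_add_univ]
  exact (sum_fiberwise_of_maps_to (fun s _ => hcard s) _).symm

end MultilinearMap

end

theorem stmt_2_general
    {E F : Type*} [NormedAddCommGroup E] [NormedSpace ℝ E]
    [NormedAddCommGroup F] [NormedSpace ℝ F]
    (n : ℕ) (P : E → F)
    (L : ∀ k : ℕ, MultilinearMap ℝ (fun _ : Fin k => E) F)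
    (hP : ∀ x : E, P x = ∑ k ∈ Finset.range (n + 1), L k (fun _ => x))
    (h0 : ContinuousAt P 0) :
    Continuous P := by
  have hdiag : ∀ k, IsHomogeneousFun (fun x => L k fun _ => x) k :=
    fun k => (L k).isHomogeneousFun_diag
  refine continuous_iff_continuousAt.2 fun a => ?_
  have hbdd : P =O[𝓝 a] fun _ => (1 : ℝ) := by
    rw [show P = _ from funext hP]
    refine IsBigO.fun_sum fun k hk => (hdiag k).isBigO_one ?_ a
    exact isBigO_one_of_sum_isHomogeneousFun hdiag hP (h0.tendsto.isBigO_one ℝ)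
      (Nat.lt_succ_iff.1 (mem_range.1 hk))
  have hshift : ∀ x,
      P (x + a) = ∑ j ∈ range (n + 1), ∑ k ∈ range (n + 1), (L k).diagTermAt a j x := by
    intro x
    rw [hP, sum_comm]
    exact sum_congr rfl fun k hk =>
      (L k).map_diag_add_eq_sum_diagTermAt a x (Nat.lt_succ_iff.1 (mem_range.1 hk))
  have hcont : ContinuousAt (fun x => P (x + a)) 0 :=
    continuousAt_zero_of_sum_isHomogeneousFun
      (fun j => IsHomogeneousFun.sum _ fun k _ => (L k).isHomogeneousFun_diagTermAt a j) hshift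
      (hbdd.comp_tendsto (map_add_right_nhds_zero a).le)
  rw [ContinuousAt, ← map_add_right_nhds_zero a, tendsto_map'_iff]
  simpa [ContinuousAt, Function.comp_def] using hcont

/-- A polynomial of degree at most `n` between normed spaces that is continuous at `0`
is continuous everywhere. -/
theorem stmt_2
    {E F : Type*} [NormedAddCommGroup E] [NormedSpace ℝ E]
    [NormedAddCommGroup F] [NormedSpace ℝ F]
    (n : ℕ) (P : E → F)
    (L : ∀ k : ℕ, MultilinearMap ℝ (fun _ : Fin k => E) F)
    (hsym : ∀ (k : ℕ) (σ : Equiv.Perm (Fin k)) (v : Fin k → E),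
      L k (fun i => v (σ i)) = L k v)
    (hP : ∀ x : E, P x = ∑ k ∈ Finset.range (n + 1), L k (fun _ => x))
    (h0 : ContinuousAt P 0) :
    Continuous P :=
  stmt_2_general n P L hP h0
end

section
/- Let E be a real normed space and L : E → ℝ a linear functional (not assumed continuous). If L maps every connected subset of E to a connected subset of ℝ, then L is continuous. -/
/-!
If `L` is discontinuous, its kernel is a dense hyperplane. Then `L⁻¹' {0, 1}` lies between the
connected set `ker L` and its closure, so it is connected, while its image `{0, 1}` is not.
-/

open Set

namespace LinearMap

variable {M : Type*} [TopologicalSpace M] [AddCommGroup M] [Module ℝ M] [IsTopologicalAddGroup M]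
  [ContinuousSMul ℝ M]

theorem isPreconnected_preimage_of_dense_ker {l : M →ₗ[ℝ] ℝ} (hl : Dense (ker l : Set M))
    {s : Set ℝ} (hs : 0 ∈ s) : IsPreconnected (l ⁻¹' s) :=
  (ker l).convex.isPreconnected.subset_closure (fun _ hx => by simpa [mem_ker.1 hx] using hs)
    (by simp [hl.closure_eq])

theorem exists_isConnected_not_isConnected_image_of_dense_ker {l : M →ₗ[ℝ] ℝ}
    (hl : Dense (ker l : Set M)) (hl₀ : l ≠ 0) :
    ∃ C : Set M, IsConnected C ∧ ¬ IsConnected (l '' C) := by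
  have hsurj : Function.Surjective l := l.surjective_or_eq_zero.resolve_right hl₀
  refine ⟨l ⁻¹' {0, 1}, ⟨⟨0, by simp⟩, isPreconnected_preimage_of_dense_ker hl (by simp)⟩,
    fun himg => ?_⟩
  rw [image_preimage_eq _ hsurj] at himg
  have : (1 / 2 : ℝ) ∈ ({0, 1} : Set ℝ) :=
    himg.isPreconnected.Icc_subset (a := 0) (b := 1) (by simp) (by simp) (by norm_num)
  norm_num at this

end LinearMap

/-- A linear functional on a real normed space mapping connected sets to connected
sets is continuous. -/
theorem stmt_4
    {E : Type*} [NormedAddCommGroup E] [NormedSpace ℝ E]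
    (L : E →ₗ[ℝ] ℝ)
    (hconn : ∀ C : Set E, IsConnected C → IsConnected (L '' C)) :
    Continuous L := by
  by_contra hL
  have hdense : Dense (LinearMap.ker L : Set E) :=
    L.isClosed_or_dense_ker.resolve_left (hL ∘ L.continuous_of_isClosed_ker)
  have hL₀ : L ≠ 0 := by
    rintro rfl
    exact hL (0 : E →L[ℝ] ℝ).continuous
  obtain ⟨C, hC, himg⟩ := L.exists_isConnected_not_isConnected_image_of_dense_ker hdense hL₀
  exact himg (hconn C hC)
end

section
/- Let E be a real normed space, L : E × E → ℝ a symmetric bilinear form (not assumed continuous), and P(x) = L(x,x) the associated 2-homogeneous polynomial. If P maps every connected subset of E to a connected subset of ℝ, then P is continuous. -/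
/-!
If `P` is bounded on the unit ball, polarization `L a b = P ((a + b) / 2) - P ((a - b) / 2)`
bounds `L` on the unit ball, hence `L` is a bounded, thus continuous, bilinear form.

Otherwise homogeneity gives arbitrarily small `x` with `|P x| ≥ 1`, and after replacing `L` by
`-L` arbitrarily small `y n` with `P (y n) ≥ 1`. Flipping signs we may assume
`L (y n) (y (n + 1)) ≥ 0`, and then `P ≥ 1 / 2` on the segment `[y n, y (n + 1)]`. The polygonal
line through the `y n` together with its limit point `0` is connected, but its image under `P`
contains `0` and a value `≥ 1` while missing `1 / 4`.
-/

open Filter Topology Set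

namespace LinearMap

section Module

variable {M : Type*} [AddCommGroup M] [Module ℝ M]

lemma exists_signs_apply_succ_nonneg (L : M →ₗ[ℝ] M →ₗ[ℝ] ℝ) (y : ℕ → M) :
    ∃ s : ℕ → M, (∀ n, s n = y n ∨ s n = -y n) ∧ ∀ n, 0 ≤ L (s n) (s (n + 1)) := by
  let align : M → M → M := fun x z => if 0 ≤ L x z then z else -z
  have halign : ∀ x z, (align x z = z ∨ align x z = -z) ∧ 0 ≤ L x (align x z) := fun x z => by
    by_cases h : 0 ≤ L x z
    · simp only [align, if_pos h, true_or, h, and_self]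
    · simp only [align, if_neg h, map_neg, or_true, true_and]
      linarith
  let s : ℕ → M := fun n => Nat.rec (y 0) (fun n sn => align sn (y (n + 1))) n
  refine ⟨s, fun n => ?_, fun n => (halign (s n) (y (n + 1))).2⟩
  cases n with
  | zero => exact Or.inl rfl
  | succ n => exact (halign (s n) (y (n + 1))).1

lemma half_le_apply_of_mem_segment (L : M →ₗ[ℝ] M →ₗ[ℝ] ℝ) (hsym : ∀ x y, L x y = L y x)
    {u v x : M} (hu : 1 ≤ L u u) (hv : 1 ≤ L v v) (huv : 0 ≤ L u v)
    (hx : x ∈ segment ℝ u v) : 1 / 2 ≤ L x x := by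
  obtain ⟨a, b, ha, hb, hab, rfl⟩ := hx
  have hexpand : L (a • u + b • v) (a • u + b • v)
      = a ^ 2 * L u u + 2 * (a * b) * L u v + b ^ 2 * L v v := by
    simp only [map_add, map_smul, add_apply, smul_apply, smul_eq_mul, hsym v u]
    ring
  rw [hexpand]
  nlinarith [mul_le_mul_of_nonneg_left hu (sq_nonneg a),
    mul_le_mul_of_nonneg_left hv (sq_nonneg b), mul_nonneg (mul_nonneg ha hb) huv,
    sq_nonneg (a - b)]

end Module

variable {E : Type*} [NormedAddCommGroup E] [NormedSpace ℝ E]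

lemma apply_eq_polarization (L : E →ₗ[ℝ] E →ₗ[ℝ] ℝ) (hsym : ∀ x y, L x y = L y x) (a b : E) :
    L a b = L ((2 : ℝ)⁻¹ • (a + b)) ((2 : ℝ)⁻¹ • (a + b))
      - L ((2 : ℝ)⁻¹ • (a - b)) ((2 : ℝ)⁻¹ • (a - b)) := by
  simp only [map_smul, map_add, map_sub, smul_apply, add_apply, sub_apply, smul_eq_mul, hsym b a]
  ring

lemma abs_apply_le_of_forall_norm_le_one (L : E →ₗ[ℝ] E →ₗ[ℝ] ℝ) {C : ℝ}
    (h : ∀ a b : E, ‖a‖ ≤ 1 → ‖b‖ ≤ 1 → |L a b| ≤ C) (a b : E) : |L a b| ≤ C * ‖a‖ * ‖b‖ := by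
  rcases eq_or_ne a 0 with rfl | ha
  · simp
  rcases eq_or_ne b 0 with rfl | hb
  · simp
  have hunit :=
    h (‖a‖⁻¹ • a) (‖b‖⁻¹ • b) (norm_smul_inv_norm ha).le (norm_smul_inv_norm hb).le
  simp only [map_smul, smul_apply, smul_eq_mul, abs_mul, abs_inv, abs_norm] at hunit
  rw [inv_mul_le_iff₀ (norm_pos_iff.2 hb), inv_mul_le_iff₀ (norm_pos_iff.2 ha)] at hunit
  linarith

lemma continuous_diag_of_forall_norm_le_one (L : E →ₗ[ℝ] E →ₗ[ℝ] ℝ) (hsym : ∀ x y, L x y = L y x)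
    {M : ℝ} (hM : ∀ x : E, ‖x‖ ≤ 1 → |L x x| ≤ M) : Continuous fun x => L x x := by
  have hhalf : ∀ c : E, ‖c‖ ≤ 1 + 1 → |L ((2 : ℝ)⁻¹ • c) ((2 : ℝ)⁻¹ • c)| ≤ M := fun c hc =>
    hM _ (by rw [norm_smul]; norm_num; linarith)
  have hball : ∀ a b : E, ‖a‖ ≤ 1 → ‖b‖ ≤ 1 → |L a b| ≤ 2 * M := fun a b ha hb => by
    rw [apply_eq_polarization L hsym]
    calc _ ≤ _ := abs_sub _ _
      _ ≤ M + M :=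
        add_le_add (hhalf _ (norm_add_le_of_le ha hb)) (hhalf _ (norm_sub_le_of_le ha hb))
      _ = 2 * M := by ring
  let B := L.mkContinuous₂ (2 * M) fun a b => abs_apply_le_of_forall_norm_le_one L hball a b
  exact B.continuous₂.comp (continuous_id.prodMk continuous_id)

lemma zero_mem_closure_one_le_abs (L : E →ₗ[ℝ] E →ₗ[ℝ] ℝ)
    (h : ∀ M : ℝ, ∃ x : E, ‖x‖ ≤ 1 ∧ M < |L x x|) : (0 : E) ∈ closure {x | 1 ≤ |L x x|} := by
  rw [Metric.mem_closure_iff]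
  intro ε hε
  obtain ⟨x, hx1, hx⟩ := h ((ε / 2) ^ 2)⁻¹
  refine ⟨(ε / 2) • x, ?_, ?_⟩
  · rw [inv_lt_iff_one_lt_mul₀ (by positivity)] at hx
    change 1 ≤ |L ((ε / 2) • x) ((ε / 2) • x)|
    simp only [map_smul, smul_apply, smul_eq_mul, abs_mul, abs_of_pos (half_pos hε)]
    nlinarith
  · rw [dist_zero_left, norm_smul, Real.norm_of_nonneg (half_pos hε).le]
    nlinarith

lemma exists_isConnected_not_isPreconnected_image (L : E →ₗ[ℝ] E →ₗ[ℝ] ℝ)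
    (hsym : ∀ x y, L x y = L y x) (h0 : (0 : E) ∈ closure {x | 1 ≤ L x x}) :
    ∃ C : Set E, IsConnected C ∧ ¬IsPreconnected ((fun x => L x x) '' C) := by
  obtain ⟨y, hyS, hy0⟩ := mem_closure_iff_seq_limit.1 h0
  obtain ⟨s, hsy, hs⟩ := exists_signs_apply_succ_nonneg L y
  have hsS : ∀ n, 1 ≤ L (s n) (s n) := fun n => by
    rcases hsy n with h | h <;> simpa [h] using hyS n
  have hs0 : Tendsto s atTop (𝓝 0) := by
    rw [tendsto_zero_iff_norm_tendsto_zero] at hy0 ⊢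
    refine hy0.congr fun n => ?_
    rcases hsy n with h | h <;> simp [h]
  set U := ⋃ n, segment ℝ (s n) (s (n + 1))
  have hU : IsPreconnected U := IsPreconnected.iUnion_of_chain
    (fun n => (convex_segment _ _).isPreconnected)
    (fun n => ⟨s (n + 1), right_mem_segment ℝ _ _, left_mem_segment ℝ _ _⟩)
  have hsU : ∀ n, s n ∈ U := fun n => mem_iUnion.2 ⟨n, left_mem_segment ℝ _ _⟩
  have hUP : ∀ x ∈ U, 1 / 2 ≤ L x x := by
    simp only [U, mem_iUnion]
    rintro x ⟨n, hx⟩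
    exact half_le_apply_of_mem_segment L hsym (hsS n) (hsS (n + 1)) (hs n) hx
  have h0U : (0 : E) ∈ closure U := mem_closure_of_tendsto hs0 (Eventually.of_forall hsU)
  refine ⟨insert 0 U, ⟨insert_nonempty _ _, hU.subset_closure (subset_insert _ _)
    (insert_subset h0U subset_closure)⟩, fun hP => ?_⟩
  obtain ⟨x, hx, hx4⟩ : (1 / 4 : ℝ) ∈ (fun x => L x x) '' insert 0 U :=
    hP.Icc_subset (a := 0) (b := L (s 0) (s 0)) ⟨0, mem_insert _ _, by simp⟩
      ⟨s 0, mem_insert_of_mem _ (hsU 0), rfl⟩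
      ⟨by norm_num, by linarith [hsS 0]⟩
  rcases hx with rfl | hx
  · simp at hx4
  · linarith [hUP x hx, show L x x = 1 / 4 from hx4]

end LinearMap

open LinearMap in
/-- If the 2-homogeneous polynomial associated to a symmetric bilinear form on a real
normed space maps connected sets to connected sets, then it is continuous. -/
theorem stmt_5
    {E : Type*} [NormedAddCommGroup E] [NormedSpace ℝ E]
    (L : E →ₗ[ℝ] E →ₗ[ℝ] ℝ)
    (hsym : ∀ x y : E, L x y = L y x)
    (P : E → ℝ) (hP : ∀ x, P x = L x x)
    (hconn : ∀ C : Set E, IsConnected C → IsConnected (P '' C)) :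
    Continuous P := by
  obtain rfl : P = fun x => L x x := funext hP
  by_contra hcont
  have hunb : ∀ M : ℝ, ∃ x : E, ‖x‖ ≤ 1 ∧ M < |L x x| := by
    by_contra! h
    obtain ⟨M, hM⟩ := h
    exact hcont (continuous_diag_of_forall_norm_le_one L hsym hM)
  have hsplit : {x : E | 1 ≤ |L x x|} = {x | 1 ≤ L x x} ∪ {x | 1 ≤ (-L) x x} := by
    ext x
    simp [le_abs]
  have h0 := zero_mem_closure_one_le_abs L hunb
  rw [hsplit, closure_union] at h0
  rcases h0 with h0 | h0
  · obtain ⟨C, hC, hPC⟩ := exists_isConnected_not_isPreconnected_image L hsym h0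
    exact hPC (hconn C hC).isPreconnected
  · obtain ⟨C, hC, hPC⟩ :=
      exists_isConnected_not_isPreconnected_image (-L) (fun x y => by simp [hsym x y]) h0
    have hneg := (hconn C hC).isPreconnected.image _ continuous_neg.continuousOn
    rw [image_image] at hneg
    exact hPC (by simpa using hneg)
end

section
/- Let E be a real normed space and L : Eⁿ → ℝ an n-linear form (not assumed continuous). If for every connected subset C of Eⁿ (with the product topology) the image L(C) is a connected subset of ℝ, then L is continuous. -/
/-!
Fixing all arguments of `L` but one gives a linear functional that still maps connected sets to
connected sets. Such a functional `f` is continuous: a discontinuous one has dense kernel `K`, so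
`K ∪ {x}` is connected for every `x`, while its image `{0, f x}` is connected only when `f x = 0`,
forcing `f = 0`. Thus `L` is separately continuous, and on Banach spaces separate continuity implies
continuity by induction on the number of arguments: the curried map `x ↦ L (x, ·)`, with values in
the Banach space of continuous `n`-linear maps, has closed graph by continuity of `L` in its
first argument.
-/

open Function Set

theorem IsPreconnected.eq_of_pair {α : Type*} [LinearOrder α] [DenselyOrdered α]
    [TopologicalSpace α] [OrderTopology α] {a b : α} (h : IsPreconnected ({a, b} : Set α)) :
    a = b := by
  wlog hab : a ≤ b generalizing a b
  · exact (this (pair_comm a b ▸ h) (le_of_not_ge hab)).symm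
  by_contra hne
  obtain ⟨c, hac, hcb⟩ := exists_between (lt_of_le_of_ne hab hne)
  rcases h.Icc_subset (mem_insert a _) (mem_insert_of_mem a rfl) ⟨hac.le, hcb.le⟩ with rfl | rfl
  · exact lt_irrefl _ hac
  · exact lt_irrefl _ hcb

section ConnectedImage

variable {E : Type*} [AddCommGroup E] [Module ℝ E] [TopologicalSpace E] [IsTopologicalAddGroup E]
  [ContinuousSMul ℝ E]

theorem LinearMap.eq_zero_of_dense_ker_of_isConnected_image (f : E →ₗ[ℝ] ℝ)
    (hf : ∀ C : Set E, IsConnected C → IsConnected (f '' C))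
    (hker : Dense (LinearMap.ker f : Set E)) : f = 0 := by
  ext x
  have hC : IsConnected (insert x (LinearMap.ker f : Set E)) :=
    ⟨insert_nonempty _ _, (LinearMap.ker f).convex.isPreconnected.subset_closure
      (subset_insert _ _) (by simp [hker.closure_eq])⟩
  have himage : f '' insert x (LinearMap.ker f : Set E) = {f x, 0} := by
    rw [image_insert_eq, image_congr fun y hy => LinearMap.mem_ker.mp hy,
      Nonempty.image_const ⟨0, (LinearMap.ker f).zero_mem⟩]
  exact (himage ▸ (hf _ hC).isPreconnected).eq_of_pair

theorem LinearMap.continuous_of_isConnected_image (f : E →ₗ[ℝ] ℝ)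
    (hf : ∀ C : Set E, IsConnected C → IsConnected (f '' C)) : Continuous f := by
  rcases f.isClosed_or_dense_ker with hker | hker
  · exact f.continuous_of_isClosed_ker hker
  · rw [f.eq_zero_of_dense_ker_of_isConnected_image hf hker]
    exact continuous_zero

end ConnectedImage

theorem MultilinearMap.continuous_toLinearMap_of_isConnected_image {ι : Type*} [DecidableEq ι]
    {M : ι → Type*} [∀ i, AddCommGroup (M i)] [∀ i, Module ℝ (M i)] [∀ i, TopologicalSpace (M i)]
    [∀ i, IsTopologicalAddGroup (M i)] [∀ i, ContinuousSMul ℝ (M i)] (L : MultilinearMap ℝ M ℝ)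
    (hL : ∀ C : Set (∀ i, M i), IsConnected C → IsConnected (L '' C)) (m : ∀ i, M i) (i : ι) :
    Continuous (L.toLinearMap m i) :=
  (L.toLinearMap m i).continuous_of_isConnected_image fun C hC => by
    have := hL _ (hC.image (update m i) (continuous_const.update i continuous_id).continuousOn)
    rwa [image_image] at this

section SeparatelyContinuous

variable {𝕜 : Type*} [NontriviallyNormedField 𝕜] {G : Type*} [NormedAddCommGroup G]
  [NormedSpace 𝕜 G] [CompleteSpace G]

theorem MultilinearMap.continuous_of_continuous_curryLeft {n : ℕ} {E : Fin (n + 1) → Type*}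
    [∀ i, NormedAddCommGroup (E i)] [∀ i, NormedSpace 𝕜 (E i)] [CompleteSpace (E 0)]
    (L : MultilinearMap 𝕜 E G) (hfirst : ∀ m, Continuous fun x => L (Fin.cons x m))
    (hcurry : ∀ x, Continuous (L.curryLeft x)) : Continuous L := by
  let Φ : E 0 →ₗ[𝕜] ContinuousMultilinearMap 𝕜 (fun i : Fin n => E i.succ) G :=
    { toFun x := ⟨L.curryLeft x, hcurry x⟩
      map_add' x y := by ext m; exact L.cons_add m x y
      map_smul' c x := by ext m; exact L.cons_smul m c x }
  have hΦ : ∀ x m, Φ x m = L (Fin.cons x m) := fun _ _ => rfl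
  have hΦcont : Continuous Φ := by
    refine Φ.continuous_of_seq_closed_graph fun u x T hu hΦu => ?_
    ext m
    refine tendsto_nhds_unique ((continuous_eval_const m).tendsto T |>.comp hΦu) ?_
    simpa only [comp_def, hΦ] using (hfirst m).tendsto x |>.comp hu
  have hL : ⇑L = (ContinuousLinearMap.mk Φ hΦcont).uncurryLeft := by
    ext m
    simp [ContinuousLinearMap.uncurryLeft_apply, hΦ]
  rw [hL]
  exact ContinuousMultilinearMap.coe_continuous _

theorem MultilinearMap.continuous_of_continuous_toLinearMap {n : ℕ} {E : Fin n → Type*}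
    [∀ i, NormedAddCommGroup (E i)] [∀ i, NormedSpace 𝕜 (E i)] [∀ i, CompleteSpace (E i)]
    (L : MultilinearMap 𝕜 E G) (hL : ∀ m i, Continuous (L.toLinearMap m i)) : Continuous L := by
  induction n with
  | zero => exact continuous_of_const fun _ _ => congrArg L (Subsingleton.elim _ _)
  | succ n ih =>
    refine L.continuous_of_continuous_curryLeft (fun m => ?_) (fun x => ih _ fun m i => ?_)
    · exact (hL (Fin.cons 0 m) 0).congr fun y => by simp [Fin.update_cons_zero]
    · exact (hL (Fin.cons x m) i.succ).congr fun y => by simp [Fin.cons_update]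

end SeparatelyContinuous

/-- An `n`-linear form on a real Banach space mapping connected subsets of `Eⁿ`
(product topology) to connected subsets of `ℝ` is continuous. -/
theorem stmt_7
    {E : Type*} [NormedAddCommGroup E] [NormedSpace ℝ E] [CompleteSpace E]
    (n : ℕ) (L : MultilinearMap ℝ (fun _ : Fin n => E) ℝ)
    (hconn : ∀ C : Set (Fin n → E), IsConnected C → IsConnected (L '' C)) :
    Continuous L :=
  L.continuous_of_continuous_toLinearMap (L.continuous_toLinearMap_of_isConnected_image hconn)
end

section
/- Let E be a complex normed space and P : E → ℂ a polynomial of degree at most n, with homogenization Q(x,λ) = Σ_{k=0}^{n} λ^{n−k} Pₖ(x) on E ⊕_∞ ℂ. If P is bounded on the closed unit ball of E, then sup{|Q(x,λ)| : ‖x‖ ≤ 1, |λ| ≤ 1} = sup{|P(x)| : ‖x‖ ≤ 1}. -/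
/-!
For fixed `x`, `λ ↦ Q(x, λ)` is a polynomial in one complex variable, and homogeneity of the
`Pₖ` gives `Q(x, λ) = λⁿ P(λ⁻¹ x)` for `λ ≠ 0`. By the maximum modulus principle `|Q(x, ·)|` on
the closed unit disc is dominated by its value at some `λ` with `|λ| = 1`, which is
`|P(λ⁻¹ x)|` with `‖λ⁻¹ x‖ = ‖x‖ ≤ 1`. Conversely `Q(x, 1) = P(x)`, so both sets of values
dominate each other and have the same supremum.
-/

open Finset Metric

theorem MultilinearMap.map_smul_diag {R M N : Type*} [CommSemiring R] [AddCommMonoid M]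
    [AddCommMonoid N] [Module R M] [Module R N] {k : ℕ}
    (f : MultilinearMap R (fun _ : Fin k => M) N) (c : R) (x : M) :
    f (fun _ => c • x) = c ^ k • f (fun _ => x) := by
  simpa using f.map_smul_univ (fun _ => c) (fun _ => x)

section Homogenize

variable {𝕜 E : Type*} [Field 𝕜] [AddCommGroup E] [Module 𝕜 E]
  (L : ∀ k : ℕ, MultilinearMap 𝕜 (fun _ : Fin k => E) 𝕜) (n : ℕ)

def homogenize (x : E) (z : 𝕜) : 𝕜 :=
  ∑ k ∈ range (n + 1), z ^ (n - k) * L k (fun _ => x)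

theorem homogenize_one (x : E) :
    homogenize L n x 1 = ∑ k ∈ range (n + 1), L k (fun _ => x) := by
  simp [homogenize]

theorem homogenize_eq_pow_mul {z : 𝕜} (hz : z ≠ 0) (x : E) :
    homogenize L n x z = z ^ n * homogenize L n (z⁻¹ • x) 1 := by
  rw [homogenize_one, mul_sum]
  refine sum_congr rfl fun k hk => ?_
  have hkn : k ≤ n := Nat.lt_succ_iff.mp (mem_range.mp hk)
  rw [(L k).map_smul_diag, smul_eq_mul, ← mul_assoc, inv_pow, ← pow_sub₀ z hz hkn]

end Homogenize

section Complex

variable {E : Type*} [NormedAddCommGroup E] [NormedSpace ℂ E]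
  (L : ∀ k : ℕ, MultilinearMap ℂ (fun _ : Fin k => E) ℂ) (n : ℕ)

theorem differentiable_homogenize (x : E) : Differentiable ℂ (homogenize L n x) :=
  Differentiable.fun_sum fun _ _ => (differentiable_pow _).mul (differentiable_const _)

theorem exists_norm_homogenize_le_norm_homogenize_one {x : E} (hx : ‖x‖ ≤ 1) {lam : ℂ}
    (hlam : ‖lam‖ ≤ 1) :
    ∃ y : E, ‖y‖ ≤ 1 ∧ ‖homogenize L n x lam‖ ≤ ‖homogenize L n y 1‖ := by
  obtain ⟨z, hz, hmax⟩ := Complex.exists_mem_frontier_isMaxOn_norm isBounded_ball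
    ⟨0, mem_ball_self one_pos⟩ (differentiable_homogenize L n x).diffContOnCl
  rw [frontier_ball (0 : ℂ) one_ne_zero, mem_sphere_zero_iff_norm] at hz
  have hz0 : z ≠ 0 := norm_ne_zero_iff.mp (hz.symm ▸ one_ne_zero)
  refine ⟨z⁻¹ • x, by rwa [norm_smul, norm_inv, hz, inv_one, one_mul], ?_⟩
  have hlam_mem : lam ∈ closure (ball (0 : ℂ) 1) := by
    rwa [closure_ball (0 : ℂ) one_ne_zero, mem_closedBall_zero_iff]
  calc ‖homogenize L n x lam‖ ≤ ‖homogenize L n x z‖ := hmax hlam_mem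
    _ = ‖homogenize L n (z⁻¹ • x) 1‖ := by
      rw [homogenize_eq_pow_mul L n hz0, norm_mul, norm_pow, hz, one_pow, one_mul]

end Complex

theorem stmt_9_general
    {E : Type*} [NormedAddCommGroup E] [NormedSpace ℂ E]
    (n : ℕ) (P : E → ℂ)
    (L : ∀ k : ℕ, MultilinearMap ℂ (fun _ : Fin k => E) ℂ)
    (hP : ∀ x : E, P x = ∑ k ∈ Finset.range (n + 1), L k (fun _ => x))
    (Q : E × ℂ → ℂ)
    (hQ : ∀ p : E × ℂ, Q p = ∑ k ∈ Finset.range (n + 1), p.2 ^ (n - k) * L k (fun _ => p.1)) :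
    sSup {r : ℝ | ∃ x : E, ∃ lam : ℂ, ‖x‖ ≤ 1 ∧ ‖lam‖ ≤ 1 ∧
        r = ‖Q (x, lam)‖} =
      sSup {r : ℝ | ∃ x : E, ‖x‖ ≤ 1 ∧ r = ‖P x‖} := by
  have hP' (x : E) : P x = homogenize L n x 1 := by rw [hP, homogenize_one]
  have hQ' (x : E) (lam : ℂ) : Q (x, lam) = homogenize L n x lam := hQ (x, lam)
  apply csSup_eq_csSup_of_forall_exists_le
  · rintro _ ⟨x, lam, hx, hlam, rfl⟩
    obtain ⟨y, hy, hle⟩ := exists_norm_homogenize_le_norm_homogenize_one L n hx hlam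
    exact ⟨_, ⟨y, hy, rfl⟩, by rwa [hQ', hP']⟩
  · rintro _ ⟨x, hx, rfl⟩
    exact ⟨_, ⟨x, 1, hx, norm_one.le, rfl⟩, by rw [hQ', hP']⟩

/-- If `P` is a polynomial of degree at most `n` on a complex normed space which is
bounded on the closed unit ball, then the sup of `|Q|` (the homogenization on
`E ⊕_∞ ℂ`) over `‖x‖ ≤ 1, |λ| ≤ 1` equals the sup of `|P|` over `‖x‖ ≤ 1`. -/
theorem stmt_9
    {E : Type*} [NormedAddCommGroup E] [NormedSpace ℂ E]
    (n : ℕ) (P : E → ℂ)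
    (L : ∀ k : ℕ, MultilinearMap ℂ (fun _ : Fin k => E) ℂ)
    (hsym : ∀ (k : ℕ) (σ : Equiv.Perm (Fin k)) (v : Fin k → E),
      L k (fun i => v (σ i)) = L k v)
    (hP : ∀ x : E, P x = ∑ k ∈ Finset.range (n + 1), L k (fun _ => x))
    (Q : E × ℂ → ℂ)
    (hQ : ∀ p : E × ℂ, Q p = ∑ k ∈ Finset.range (n + 1), p.2 ^ (n - k) * L k (fun _ => p.1))
    (hbdd : ∃ M : ℝ, ∀ x : E, ‖x‖ ≤ 1 → ‖P x‖ ≤ M) :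
    sSup {r : ℝ | ∃ x : E, ∃ lam : ℂ, ‖x‖ ≤ 1 ∧ ‖lam‖ ≤ 1 ∧
        r = ‖Q (x, lam)‖} =
      sSup {r : ℝ | ∃ x : E, ‖x‖ ≤ 1 ∧ r = ‖P x‖} :=
  stmt_9_general n P L hP Q hQ
end

section
/- Let I be an uncountable set and for each nonempty C ⊆ I define H_C : ℝ × I^ℕ → ℝ by H_C(x,(x_j)) = x if all x_j ∈ C, else 0. Then every nontrivial finite linear combination Σ_{k=1}^m λ_k H_{C_k} with distinct nonempty sets C_k and all λ_k ≠ 0 is an unbounded function. -/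
open scoped Classical

/-!
Choose `k` with `C k` maximal among the `C j`; by injectivity no other `C j` contains `C k`.
A sequence in `C k` that visits a point of `C k \ C j` for every `j ≠ k` makes every summand
except the `k`-th vanish, so the combination equals `lam k * x` there, which is unbounded in `x`.
-/

theorem Function.Injective.exists_forall_ne_not_subset {ι α : Type*} [Finite ι] [Nonempty ι]
    {C : ι → Set α} (hC : Function.Injective C) : ∃ k, ∀ j, j ≠ k → ¬ C k ⊆ C j := by
  obtain ⟨k, -, hk⟩ := Set.finite_univ.exists_maximalFor C Set.univ Set.univ_nonempty
  exact ⟨k, fun j hjk hkj => hjk (hC (hk trivial hkj |>.antisymm hkj))⟩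

theorem Set.Nonempty.exists_seq_mem_forall_exists_notMem {ι α : Type*} [Countable ι]
    {s : Set α} (hs : s.Nonempty) {t : ι → Set α} (h : ∀ i, ¬ s ⊆ t i) :
    ∃ f : ℕ → α, (∀ n, f n ∈ s) ∧ ∀ i, ∃ n, f n ∉ t i := by
  choose x hxs hxt using fun i => Set.not_subset.mp (h i)
  -- enumerating `Option ι` rather than `ι` avoids a case split on whether `ι` is empty
  obtain ⟨e, he⟩ := exists_surjective_nat (Option ι)
  refine ⟨fun n => (e n).elim hs.some x, fun n => ?_, fun i => ?_⟩
  · show (e n).elim hs.some x ∈ s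
    cases e n with
    | none => exact hs.some_mem
    | some i => exact hxs i
  · obtain ⟨n, hn⟩ := he (some i)
    exact ⟨n, by simp only [hn, Option.elim_some]; exact hxt i⟩

theorem stmt_13_general
    (I : Type*)
    (m : ℕ) (hm : 1 ≤ m) (C : Fin m → Set I)
    (hinj : Function.Injective C) (hne : ∀ k, (C k).Nonempty)
    (lam : Fin m → ℝ) (hlam : ∀ k, lam k ≠ 0) :
    ¬ ∃ M : ℝ, ∀ p : ℝ × (ℕ → I),
      |∑ k : Fin m, lam k * (if ∀ j : ℕ, p.2 j ∈ C k then p.1 else 0)| ≤ M := by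
  rintro ⟨M, hM⟩
  have : Nonempty (Fin m) := ⟨⟨0, hm⟩⟩
  obtain ⟨k, hk⟩ := hinj.exists_forall_ne_not_subset
  obtain ⟨f, hfk, hfj⟩ := (hne k).exists_seq_mem_forall_exists_notMem
    (t := fun j : {j // j ≠ k} => C j) fun j => hk j j.2
  have hsum : ∀ x : ℝ,
      ∑ j : Fin m, lam j * (if ∀ n, f n ∈ C j then x else 0) = lam k * x := by
    intro x
    rw [Finset.sum_eq_single k]
    · simp [hfk]
    · intro j _ hjk
      obtain ⟨n, hn⟩ := hfj ⟨j, hjk⟩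
      simp [show ¬ ∀ n, f n ∈ C j from fun h => hn (h n)]
    · simp
  have hbound := hM ((|M| + 1) / lam k, f)
  rw [hsum, mul_div_cancel₀ _ (hlam k)] at hbound
  linarith [le_abs_self (|M| + 1), le_abs_self M]

/-- Every nontrivial finite linear combination (distinct nonempty sets, all nonzero
coefficients) of the functions `H_C` is unbounded on `ℝ × I^ℕ`. -/
theorem stmt_13
    (I : Type*) [Uncountable I]
    (m : ℕ) (hm : 1 ≤ m) (C : Fin m → Set I)
    (hinj : Function.Injective C) (hne : ∀ k, (C k).Nonempty)
    (lam : Fin m → ℝ) (hlam : ∀ k, lam k ≠ 0) :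
    ¬ ∃ M : ℝ, ∀ p : ℝ × (ℕ → I),
      |∑ k : Fin m, lam k * (if ∀ j : ℕ, p.2 j ∈ C k then p.1 else 0)| ≤ M :=
  stmt_13_general I m hm C hinj hne lam hlam
end

section
/- If I is an infinite set with card(I) = card(ℝ × I^ℕ) (in particular any uncountable I with card(I)^{ℵ₀} = card(I), e.g. an uncountable subset of ℝ of full cardinality 𝔠), then the set of unbounded real-valued functions on I is 2^{card(I)}-lineable: there exists a linearly independent family of cardinality 2^{card(I)} of functions I → ℝ every nontrivial finite linear combination of which is unbounded. -/
universe u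

/-!
Along a bijection `e : I ≃ ℝ × (ℕ → I)`, attach to `C ⊆ I` the function
`(x, g) ↦ exp (x * (1 + t_g C))`, where `t_g C = ∑ₙ [g n ∈ C] 3⁻ⁿ` records which terms of `g`
lie in `C`. Given finitely many distinct sets, choose `g` running through a point of each
pairwise symmetric difference: the rates `1 + t_g C` are then distinct and positive, and a
nontrivial combination of exponentials with distinct positive rates is unbounded as `x → ∞`,
since the term with the largest rate dominates.
-/

open Filter Topology Real

theorem tendsto_sum_mul_exp_mul_sub_of_isMax {ι : Type*} (s : Finset ι) (c T : ι → ℝ)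
    {a₀ : ι} (ha₀ : a₀ ∈ s) (hmax : ∀ a ∈ s, a ≠ a₀ → c a ≠ 0 → T a < T a₀) :
    Tendsto (fun x => ∑ a ∈ s, c a * exp (x * (T a - T a₀))) atTop (𝓝 (c a₀)) := by
  classical
  rw [show c a₀ = ∑ a ∈ s, if a = a₀ then c a else 0 by simp [ha₀]]
  refine tendsto_finsetSum s fun a ha => ?_
  by_cases h₀ : a = a₀
  · subst h₀
    simp
  by_cases hc : c a = 0
  · simp [h₀, hc]
  have hlt : T a - T a₀ < 0 := sub_neg.mpr (hmax a ha h₀ hc)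
  simpa [h₀] using
    ((tendsto_exp_atBot.comp (tendsto_id.atTop_mul_const_of_neg hlt)).const_mul (c a))

theorem not_bounded_sum_mul_exp_mul {ι : Type*} (s : Finset ι) (c T : ι → ℝ)
    (hT : Set.InjOn T s) (hpos : ∀ a ∈ s, 0 < T a) (hc : ∃ a ∈ s, c a ≠ 0) :
    ¬ ∃ M, ∀ x : ℝ, |∑ a ∈ s, c a * exp (x * T a)| ≤ M := by
  classical
  rintro ⟨M, hM⟩
  obtain ⟨a₀, ha₀, hc₀⟩ := hc
  obtain ⟨a₁, ha₁, hmax⟩ := (s.filter (c · ≠ 0)).exists_max_image T ⟨a₀, by simp [ha₀, hc₀]⟩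
  rw [Finset.mem_filter] at ha₁
  have hlim := tendsto_sum_mul_exp_mul_sub_of_isMax s c T ha₁.1 fun a ha hne hca =>
    (hmax a (Finset.mem_filter.mpr ⟨ha, hca⟩)).lt_of_ne fun h => hne (hT ha ha₁.1 h)
  have hdecay : Tendsto (fun x => M * exp (x * -T a₁)) atTop (𝓝 0) := by
    simpa using (tendsto_exp_atBot.comp
      (tendsto_id.atTop_mul_const_of_neg (neg_neg_of_pos (hpos a₁ ha₁.1)))).const_mul M
  have hbound (x : ℝ) :
      ‖∑ a ∈ s, c a * exp (x * (T a - T a₁))‖ ≤ M * exp (x * -T a₁) := by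
    have hfactor : ∑ a ∈ s, c a * exp (x * (T a - T a₁)) =
        (∑ a ∈ s, c a * exp (x * T a)) * exp (x * -T a₁) := by
      rw [Finset.sum_mul]
      refine Finset.sum_congr rfl fun a _ => ?_
      rw [mul_assoc, ← exp_add]
      ring_nf
    rw [hfactor, norm_mul, norm_of_nonneg (exp_pos _).le, norm_eq_abs]
    exact mul_le_mul_of_nonneg_right (hM x) (exp_pos _).le
  exact ha₁.2 (tendsto_nhds_unique hlim (squeeze_zero_norm hbound hdecay))

theorem exists_seq_forall_mem_iff_imp_eq {I : Type*} [Nonempty I] (s : Finset (Set I)) :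
    ∃ g : ℕ → I, ∀ A ∈ s, ∀ B ∈ s, (∀ n, g n ∈ A ↔ g n ∈ B) → A = B := by
  have hsep (A B : Set I) : ∃ x, A ≠ B → ¬(x ∈ A ↔ x ∈ B) := by
    by_cases h : A = B
    · exact ⟨Classical.arbitrary I, fun h' => (h' h).elim⟩
    · obtain ⟨x, hx⟩ := Set.symmDiff_nonempty.mpr h
      exact ⟨x, fun _ => by rw [Set.mem_symmDiff] at hx; tauto⟩
  choose w hw using hsep
  let P : Set I :=
    insert (Classical.arbitrary I) ((fun p : Set I × Set I => w p.1 p.2) '' ↑(s ×ˢ s))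
  have hP : P.Countable := ((s ×ˢ s).finite_toSet.image _).insert _ |>.countable
  obtain ⟨g, hg⟩ := hP.exists_eq_range (Set.insert_nonempty _ _)
  refine ⟨g, fun A hA B hB hAB => by_contra fun hne => ?_⟩
  obtain ⟨n, hn⟩ : w A B ∈ Set.range g :=
    hg ▸ Set.mem_insert_of_mem _ ⟨(A, B), by simp [hA, hB], rfl⟩
  exact hw A B hne (hn ▸ hAB n)

noncomputable section

variable {I : Type*}

open Classical in
def setCode (g : ℕ → I) (C : Set I) : ℝ :=
  Cardinal.cantorFunction (1 / 3) fun n => decide (g n ∈ C)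

theorem setCode_nonneg (g : ℕ → I) (C : Set I) : 0 ≤ setCode g C :=
  tsum_nonneg fun _ => Cardinal.cantorFunctionAux_nonneg (by norm_num)

theorem setCode_eq_setCode_iff {g : ℕ → I} {A B : Set I} :
    setCode g A = setCode g B ↔ ∀ n, (g n ∈ A ↔ g n ∈ B) := by
  refine ⟨fun h n => ?_, fun h => ?_⟩
  · simpa using congrFun (Cardinal.cantorFunction_injective (by norm_num) (by norm_num) h) n
  · exact congrArg (Cardinal.cantorFunction _) (funext fun n => decide_eq_decide.mpr (h n))

/-- The paper's `H_C`, transported along `e`. -/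
def expSetCodeFamily (e : I ≃ ℝ × (ℕ → I)) (C : Set I) (i : I) : ℝ :=
  exp ((e i).1 * (1 + setCode (e i).2 C))

theorem expSetCodeFamily_sum_not_bounded [Nonempty I] (e : I ≃ ℝ × (ℕ → I))
    (s : Finset (Set I)) (c : Set I → ℝ) (hc : ∃ a ∈ s, c a ≠ 0) :
    ¬ ∃ M : ℝ, ∀ i : I, |∑ a ∈ s, c a * expSetCodeFamily e a i| ≤ M := by
  rintro ⟨M, hM⟩
  obtain ⟨g, hg⟩ := exists_seq_forall_mem_iff_imp_eq s
  refine not_bounded_sum_mul_exp_mul s c (fun C => 1 + setCode g C) ?_ ?_ hc ⟨M, fun x => ?_⟩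
  · exact fun A hA B hB h => hg A hA B hB (setCode_eq_setCode_iff.mp (add_left_cancel h))
  · exact fun C _ => add_pos_of_pos_of_nonneg one_pos (setCode_nonneg g C)
  · simpa [expSetCodeFamily] using hM (e.symm (x, g))

end

theorem linearIndependent_of_forall_sum_not_bounded {ι I : Type*} (F : ι → I → ℝ)
    (hF : ∀ (s : Finset ι) (c : ι → ℝ), (∃ a ∈ s, c a ≠ 0) →
      ¬ ∃ M : ℝ, ∀ i : I, |∑ a ∈ s, c a * F a i| ≤ M) :
    LinearIndependent ℝ F := by
  refine linearIndependent_iff'.mpr fun s c hsum a ha => by_contra fun hca => ?_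
  refine hF s c ⟨a, ha, hca⟩ ⟨0, fun i => ?_⟩
  have hi := congrFun hsum i
  simp only [Finset.sum_apply, Pi.smul_apply, smul_eq_mul, Pi.zero_apply] at hi
  simp [hi]

/-- If `I` is infinite with `card I = card (ℝ × I^ℕ)`, then the set of unbounded
real functions on `I` is `2^card I`-lineable: there is a linearly independent family,
indexed by `Set I` (hence of cardinality `2^card I`), of functions `I → ℝ` all of whose
nontrivial finite linear combinations are unbounded. -/
theorem stmt_14
    (I : Type u) [Infinite I]
    (hcard : Cardinal.mk I = Cardinal.mk (ℝ × (ℕ → I))) :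
    ∃ F : Set I → (I → ℝ),
      LinearIndependent ℝ F ∧
      ∀ (s : Finset (Set I)) (c : Set I → ℝ), (∃ a ∈ s, c a ≠ 0) →
        ¬ ∃ M : ℝ, ∀ i : I, |∑ a ∈ s, c a * F a i| ≤ M := by
  obtain ⟨e⟩ := Cardinal.eq.mp hcard
  exact ⟨expSetCodeFamily e,
    linearIndependent_of_forall_sum_not_bounded _ (expSetCodeFamily_sum_not_bounded e),
    expSetCodeFamily_sum_not_bounded e⟩
end

section
/- Let E be a real normed space of infinite (algebraic) dimension λ. Then the set of non-continuous (unbounded) linear functionals on E is 2^λ-lineable: there is a linearly independent family of cardinality 2^λ of linear functionals on E, every nontrivial finite linear combination of which is discontinuous. -/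
universe u

open Cardinal

/-!
Fix a Hamel basis `(b i)` of `E` and split its index set `I` as `I ≃ I × ℕ`. To `h : I → ℝ`
attach the functional with `b i ↦ n ‖b i‖ h j` when `i ↔ (j, n)`. If `h j ≠ 0`, the copies
`(j, n)`, `n ∈ ℕ`, make it unbounded on the unit sphere, so this assignment is a linear embedding of
`I → ℝ` whose nonzero values are all discontinuous. The image of a basis of `I → ℝ`, which has
cardinality `#(I → ℝ) = 𝔠 ^ #I = 2 ^ #I` by Erdős–Kaplansky, is the required family.
-/

theorem exists_linearIndependent_forall_sum_mem {K V W : Type*} [DivisionRing K]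
    [AddCommGroup V] [Module K V] [AddCommGroup W] [Module K W]
    (Φ : V →ₗ[K] W) (P : W → Prop) (hP0 : ¬ P 0) (hP : ∀ v ≠ 0, P (Φ v)) :
    ∃ (ι : Type _) (F : ι → W), #ι = Module.rank K V ∧ LinearIndependent K F ∧
      ∀ (s : Finset ι) (c : ι → K), (∃ i ∈ s, c i ≠ 0) → P (∑ i ∈ s, c i • F i) := by
  classical
  let B := Module.Basis.ofVectorSpace K V
  have hΦ : LinearMap.ker Φ = ⊥ := by
    refine LinearMap.ker_eq_bot'.mpr fun v hv => ?_
    by_contra hne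
    exact hP0 (hv ▸ hP v hne)
  refine ⟨_, fun i => Φ (B i), B.mk_eq_rank'', B.linearIndependent.map' Φ hΦ, ?_⟩
  rintro s c ⟨i, his, hci⟩
  have hsum : ∑ j ∈ s, c j • B j ≠ 0 := fun h0 =>
    hci (linearIndependent_iff'.mp B.linearIndependent s c h0 i his)
  simpa only [map_sum, map_smul] using hP _ hsum

theorem LinearMap.not_continuous_of_forall_exists_lt {E : Type*} [SeminormedAddCommGroup E]
    [NormedSpace ℝ E] (f : E →ₗ[ℝ] ℝ) (hf : ∀ C : ℝ, ∃ x, C * ‖x‖ < |f x|) :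
    ¬ Continuous f := fun hcont => by
  let g : E →L[ℝ] ℝ := ⟨f, hcont⟩
  obtain ⟨x, hx⟩ := hf ‖g‖
  exact (g.le_opNorm x).not_gt hx

theorem Cardinal.continuum_power_eq_two_power {a : Cardinal} (ha : ℵ₀ ≤ a) :
    𝔠 ^ a = 2 ^ a := by
  rw [← two_power_aleph0, ← power_mul, aleph0_mul_eq ha]

theorem rank_fun_real_eq_two_power {I : Type*} [Infinite I] :
    Module.rank ℝ (I → ℝ) = 2 ^ #I := by
  rw [rank_fun_infinite, mk_arrow, mk_real, lift_continuum, lift_uzero,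
    continuum_power_eq_two_power (aleph0_le_mk I)]

namespace Module.Basis

variable {I E : Type*} [NormedAddCommGroup E] [NormedSpace ℝ E]

noncomputable def weightedConstr (b : Basis I ℝ E) (e : I ≃ I × ℕ) :
    (I → ℝ) →ₗ[ℝ] (E →ₗ[ℝ] ℝ) :=
  (b.constr ℝ).toLinearMap ∘ₗ
    LinearMap.pi fun i => (((e i).2 : ℝ) * ‖b i‖) • LinearMap.proj (e i).1

theorem weightedConstr_apply_basis (b : Basis I ℝ E) (e : I ≃ I × ℕ) (h : I → ℝ) (i : I) :
    b.weightedConstr e h (b i) = (e i).2 * ‖b i‖ * h (e i).1 := by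
  simp [weightedConstr, constr_basis]

theorem not_continuous_weightedConstr (b : Basis I ℝ E) (e : I ≃ I × ℕ) {h : I → ℝ}
    (hh : h ≠ 0) : ¬ Continuous (b.weightedConstr e h) := by
  obtain ⟨j, hj⟩ := Function.ne_iff.mp hh
  refine LinearMap.not_continuous_of_forall_exists_lt _ fun C => ?_
  obtain ⟨n, hn⟩ := exists_nat_gt (C / |h j|)
  let x := b (e.symm (j, n))
  have hx : 0 < ‖x‖ := norm_pos_iff.mpr (b.ne_zero _)
  refine ⟨x, ?_⟩
  rw [weightedConstr_apply_basis, e.apply_symm_apply, abs_mul, abs_mul, Nat.abs_cast, abs_norm,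
    mul_right_comm]
  exact mul_lt_mul_of_pos_right ((div_lt_iff₀ (abs_pos.mpr hj)).mp hn) hx

end Module.Basis

theorem stmt_16_general
    {E : Type u} [NormedAddCommGroup E] [NormedSpace ℝ E]
    (hinf : ¬ FiniteDimensional ℝ E) :
    ∃ (ι : Type u) (F : ι → (E →ₗ[ℝ] ℝ)),
      Cardinal.mk ι = 2 ^ Module.rank ℝ E ∧
      LinearIndependent ℝ F ∧
      ∀ (s : Finset ι) (c : ι → ℝ), (∃ i ∈ s, c i ≠ 0) →
        ¬ Continuous (⇑(∑ i ∈ s, c i • F i) : E → ℝ) := by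
  let b := Module.Basis.ofVectorSpace ℝ E
  let I := Module.Basis.ofVectorSpaceIndex ℝ E
  have hI : #I = Module.rank ℝ E := b.mk_eq_rank''
  have : Infinite I := not_finite_iff_infinite.mp fun _ => hinf (Module.Finite.of_basis b)
  obtain ⟨e⟩ : Nonempty (I ≃ I × ℕ) := by
    rw [← Cardinal.eq, mk_prod, mk_nat, lift_uzero, lift_aleph0, mul_aleph0_eq (aleph0_le_mk I)]
  obtain ⟨ι, F, hι, hF, hsum⟩ := exists_linearIndependent_forall_sum_mem (b.weightedConstr e)
    (fun f => ¬ Continuous f) (fun h => h continuous_zero) fun _ => b.not_continuous_weightedConstr e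
  exact ⟨ι, F, by rw [hι, rank_fun_real_eq_two_power, hI], hF, hsum⟩

/-- On a real normed space of infinite algebraic dimension `λ` (with `λ^ℵ₀ = λ`),
the set of discontinuous linear functionals is `2^λ`-lineable: there is a linearly
independent family of `2^λ` linear functionals every nontrivial finite linear
combination of which is discontinuous. -/
theorem stmt_16
    {E : Type u} [NormedAddCommGroup E] [NormedSpace ℝ E]
    (hinf : ¬ FiniteDimensional ℝ E)
    (hrank : Module.rank ℝ E ^ Cardinal.aleph0.{u} = Module.rank ℝ E) :
    ∃ (ι : Type u) (F : ι → (E →ₗ[ℝ] ℝ)),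
      Cardinal.mk ι = 2 ^ Module.rank ℝ E ∧
      LinearIndependent ℝ F ∧
      ∀ (s : Finset ι) (c : ι → ℝ), (∃ i ∈ s, c i ≠ 0) →
        ¬ Continuous (⇑(∑ i ∈ s, c i • F i) : E → ℝ) :=
  stmt_16_general hinf
end

section
/- Let E be a real normed space of infinite algebraic dimension λ and n ≥ 1. Then the set of non-continuous n-homogeneous polynomials P : E → ℝ (diagonals of symmetric n-linear forms, unbounded on the unit ball) is 2^λ-lineable. -/
/-!
Index a Hamel basis of `E` by `Finset κ × ℕ`, where `#κ = dim E` (possible since `κ` is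
infinite), and normalise it: `u (F, k) = b (F, k) / ‖b (F, k)‖`. For `A ⊆ κ` let `f_A` be the
linear functional with `f_A (u (F, k)) = k` if `F ⊆ A` and `0` otherwise, and take the
`n`-homogeneous polynomial `P_A = f_A ^ n`, the diagonal of the symmetric form
`(x₁, …, xₙ) ↦ ∏ f_A xᵢ`.

Given a nontrivial combination `∑ c_A P_A`, pick `A₀` maximal among the `A` with `c_A ≠ 0`, and
a finite `F ⊆ A₀` contained in no other such `A`. Then `∑ c_A P_A (u (F, k)) = kⁿ c_{A₀}`, which
is unbounded in `k`. This gives both the linear independence of the `2 ^ #κ` polynomials `P_A`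
and the unboundedness on the unit ball of every nonzero combination.
-/

universe u v

theorem Finset.exists_finset_subset_forall_not_subset {α : Type*} {A₀ : Set α}
    (t : Finset (Set α)) (ht : ∀ A ∈ t, ¬ A₀ ⊆ A) :
    ∃ F : Finset α, ↑F ⊆ A₀ ∧ ∀ A ∈ t, ¬ ↑F ⊆ A := by
  classical
  choose w hw using fun A : t => Set.not_subset.1 (ht A A.2)
  refine ⟨Finset.univ.image w, ?_, fun A hA hsub => (hw ⟨A, hA⟩).2 (hsub ?_)⟩
  · intro j hj
    obtain ⟨A, -, rfl⟩ := Finset.mem_image.1 hj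
    exact (hw A).1
  · exact Finset.mem_image_of_mem w (Finset.mem_univ _)

open Classical in
theorem Finset.exists_sum_ite_subset_ne_zero {α M : Type*} [AddCommMonoid M]
    {s : Finset (Set α)} {c : Set α → M} (hc : ∃ A ∈ s, c A ≠ 0) :
    ∃ F : Finset α, ∑ A ∈ s, (if (F : Set α) ⊆ A then c A else 0) ≠ 0 := by
  set T := s.filter (c · ≠ 0)
  obtain ⟨A₀, hA₀T, hA₀max⟩ := T.exists_maximal (by simpa [T, Finset.Nonempty] using hc)
  have hA₀ := Finset.mem_filter.1 hA₀T
  obtain ⟨F, hFA₀, hF⟩ := (T.erase A₀).exists_finset_subset_forall_not_subset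
    fun A hA hsub => (Finset.mem_erase.1 hA).1 <|
      le_antisymm (hA₀max (Finset.mem_of_mem_erase hA) hsub) hsub
  refine ⟨F, ?_⟩
  rw [Finset.sum_eq_single_of_mem A₀ hA₀.1, if_pos hFA₀]
  · exact hA₀.2
  · intro A hA hne
    by_cases hcA : c A = 0
    · simp [hcA]
    · exact if_neg (hF A (Finset.mem_erase.2 ⟨hne, Finset.mem_filter.2 ⟨hA, hcA⟩⟩))

theorem exists_basis_finset_prod_nat {K : Type*} {V : Type v} [DivisionRing K] [AddCommGroup V]
    [Module K V] (h : ¬ FiniteDimensional K V) :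
    ∃ κ : Type v, Cardinal.mk κ = Module.rank K V ∧
      Nonempty (Module.Basis (Finset κ × ℕ) K V) := by
  let b := Module.Basis.ofVectorSpace K V
  have : Infinite (Module.Basis.ofVectorSpaceIndex K V) :=
    not_finite_iff_infinite.1 fun _ => h (Module.Finite.of_basis b)
  refine ⟨_, b.mk_eq_rank'', ?_⟩
  have hcard : Cardinal.mk (Finset (Module.Basis.ofVectorSpaceIndex K V) × ℕ)
      = Cardinal.mk (Module.Basis.ofVectorSpaceIndex K V) := by
    rw [Cardinal.mk_prod, Cardinal.mk_finset_of_infinite, Cardinal.mk_nat, Cardinal.lift_uzero,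
      Cardinal.lift_aleph0]
    exact Cardinal.mul_aleph0_eq (Cardinal.aleph0_le_mk _)
  obtain ⟨e⟩ := Cardinal.eq.1 hcard
  exact ⟨b.reindex e.symm⟩

namespace LinearMap

variable {R M : Type*} [CommSemiring R] [AddCommMonoid M] [Module R M] (φ : M →ₗ[R] R) (n : ℕ)

noncomputable def powMultilinear : MultilinearMap R (fun _ : Fin n => M) R :=
  (MultilinearMap.mkPiAlgebra R (Fin n) R).compLinearMap fun _ => φ

theorem powMultilinear_apply (v : Fin n → M) : φ.powMultilinear n v = ∏ i, φ (v i) := by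
  simp [powMultilinear]

theorem powMultilinear_comp_perm (σ : Equiv.Perm (Fin n)) (v : Fin n → M) :
    φ.powMultilinear n (fun t => v (σ t)) = φ.powMultilinear n v := by
  simp only [powMultilinear_apply]
  exact Equiv.prod_comp σ fun t => φ (v t)

theorem powMultilinear_diag (x : M) : φ.powMultilinear n (fun _ => x) = φ x ^ n := by
  simp [powMultilinear_apply]

end LinearMap

section SubsetFunctional

variable {κ E : Type*} [NormedAddCommGroup E] [NormedSpace ℝ E]
  (b : Module.Basis (Finset κ × ℕ) ℝ E)

open Classical in
noncomputable def subsetFunctional (A : Set κ) : E →ₗ[ℝ] ℝ :=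
  b.constr ℝ fun p => if (p.1 : Set κ) ⊆ A then p.2 * ‖b p‖ else 0

open Classical in
theorem subsetFunctional_normalized (A : Set κ) (F : Finset κ) (k : ℕ) :
    subsetFunctional b A (‖b (F, k)‖⁻¹ • b (F, k)) =
      if (F : Set κ) ⊆ A then (k : ℝ) else 0 := by
  have hb : ‖b (F, k)‖ ≠ 0 := norm_ne_zero_iff.2 (b.ne_zero _)
  rw [map_smul, subsetFunctional, b.constr_basis, smul_eq_mul]
  split_ifs
  · field_simp
  · rw [mul_zero]

open Classical in
theorem sum_mul_subsetFunctional_pow_normalized (s : Finset (Set κ)) (c : Set κ → ℝ)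
    (F : Finset κ) (k : ℕ) {n : ℕ} (hn : n ≠ 0) :
    ∑ A ∈ s, c A * subsetFunctional b A (‖b (F, k)‖⁻¹ • b (F, k)) ^ n
      = (k : ℝ) ^ n * ∑ A ∈ s, if (F : Set κ) ⊆ A then c A else 0 := by
  rw [Finset.mul_sum]
  refine Finset.sum_congr rfl fun A _ => ?_
  rw [subsetFunctional_normalized]
  split_ifs <;> simp [zero_pow hn, mul_comm]

theorem not_bounded_sum_mul_subsetFunctional_pow {n : ℕ} (hn : n ≠ 0) (s : Finset (Set κ))
    (c : Set κ → ℝ) (hc : ∃ A ∈ s, c A ≠ 0) :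
    ¬ ∃ M : ℝ, ∀ x : E, ‖x‖ ≤ 1 → |∑ A ∈ s, c A * subsetFunctional b A x ^ n| ≤ M := by
  classical
  rintro ⟨M, hM⟩
  obtain ⟨F, hF⟩ := Finset.exists_sum_ite_subset_ne_zero hc
  set d := ∑ A ∈ s, if (F : Set κ) ⊆ A then c A else 0
  obtain ⟨k, hk⟩ := exists_nat_gt (M / |d|)
  have hbound := hM (‖b (F, k)‖⁻¹ • b (F, k)) (norm_smul_inv_norm (b.ne_zero _)).le
  rw [sum_mul_subsetFunctional_pow_normalized b s c F k hn, abs_mul, abs_pow,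
    Nat.abs_cast] at hbound
  have hkn : (k : ℝ) ≤ (k : ℝ) ^ n := by exact_mod_cast Nat.le_self_pow hn k
  have hd : 0 < |d| := abs_pos.2 hF
  have : M < k * |d| := (div_lt_iff₀ hd).1 hk
  nlinarith

end SubsetFunctional

theorem stmt_18_general
    {E : Type u} [NormedAddCommGroup E] [NormedSpace ℝ E]
    (hinf : ¬ FiniteDimensional ℝ E)
    (n : ℕ) (hn : 1 ≤ n) :
    ∃ (ι : Type u) (L : ι → MultilinearMap ℝ (fun _ : Fin n => E) ℝ),
      Cardinal.mk ι = 2 ^ Module.rank ℝ E ∧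
      (∀ (i : ι) (σ : Equiv.Perm (Fin n)) (v : Fin n → E),
        L i (fun t => v (σ t)) = L i v) ∧
      LinearIndependent ℝ (fun i : ι => (fun x : E => L i (fun _ => x))) ∧
      ∀ (s : Finset ι) (c : ι → ℝ), (∃ i ∈ s, c i ≠ 0) →
        ¬ ∃ M : ℝ, ∀ x : E, ‖x‖ ≤ 1 →
          |∑ i ∈ s, c i * L i (fun _ => x)| ≤ M := by
  obtain ⟨κ, hκ, ⟨b⟩⟩ := exists_basis_finset_prod_nat hinf
  have hunbdd :=
    not_bounded_sum_mul_subsetFunctional_pow b (Nat.one_le_iff_ne_zero.1 hn)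
  refine ⟨Set κ, fun A => (subsetFunctional b A).powMultilinear n, by rw [Cardinal.mk_set, hκ],
    fun A => (subsetFunctional b A).powMultilinear_comp_perm n, ?_, ?_⟩
  · simp only [LinearMap.powMultilinear_diag]
    rw [linearIndependent_iff']
    intro s c hsum A hA
    by_contra hcA
    refine hunbdd s c ⟨A, hA, hcA⟩ ⟨0, fun x _ => ?_⟩
    simpa using congrFun hsum x
  · simpa only [LinearMap.powMultilinear_diag] using hunbdd

/-- On a real normed space of infinite algebraic dimension `λ` (with `λ^ℵ₀ = λ`),
the set of non-continuous `n`-homogeneous polynomials (diagonals of symmetric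
`n`-linear forms, unbounded on the unit ball) is `2^λ`-lineable. -/
theorem stmt_18
    {E : Type u} [NormedAddCommGroup E] [NormedSpace ℝ E]
    (hinf : ¬ FiniteDimensional ℝ E)
    (hrank : Module.rank ℝ E ^ Cardinal.aleph0.{u} = Module.rank ℝ E)
    (n : ℕ) (hn : 1 ≤ n) :
    ∃ (ι : Type u) (L : ι → MultilinearMap ℝ (fun _ : Fin n => E) ℝ),
      Cardinal.mk ι = 2 ^ Module.rank ℝ E ∧
      (∀ (i : ι) (σ : Equiv.Perm (Fin n)) (v : Fin n → E),
        L i (fun t => v (σ t)) = L i v) ∧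
      LinearIndependent ℝ (fun i : ι => (fun x : E => L i (fun _ => x))) ∧
      ∀ (s : Finset ι) (c : ι → ℝ), (∃ i ∈ s, c i ≠ 0) →
        ¬ ∃ M : ℝ, ∀ x : E, ‖x‖ ≤ 1 →
          |∑ i ∈ s, c i * L i (fun _ => x)| ≤ M :=
  stmt_18_general hinf n hn
end
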